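/- arXiv:1711.08815 — 9 statements merged into one kernel-verified Lean document; each statement's English description precedes it below -/
import Mathlib

section
/- Let Γ be a finite set and V a finite index set, and let all random objects below live on a common probability space. Let R be a random subset of Γ such that the events {i ∈ R}, i ∈ Γ, are positively associated. Let X^r_i, for r ⊆ Γ and i ∈ V, be events such that: (i) r' ⊆ r implies X^{r'}_i ⊆ X^r_i for all i ∈ V; and (ii) for every r ⊆ Γ, the family (X^r_i)_{i ∈ V} is positively associated and the random vector (1_{X^r_i})_{i ∈ V} is independent of R. Define, for each i ∈ V, the event X^R_i = ⋃_{r ⊆ Γ} ({R = r} ∩ X^r_i). Then the events (X^R_i)_{i ∈ V} are positively associated. -/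
open MeasureTheory ProbabilityTheory
open scoped Classical

/-- A finite family of events `A i` is positively associated under `μ`:
for all bounded measurable monotone `f g : (I → Bool) → ℝ`,
`E[f(X) g(X)] ≥ E[f(X)] E[g(X)]` where `X ω i = true` iff `ω ∈ A i`. -/
def PositivelyAssociated {Ω : Type*} [MeasurableSpace Ω] (μ : Measure Ω)
    {I : Type*} (A : I → Set Ω) : Prop :=
  ∀ f g : (I → Bool) → ℝ,
    Measurable f → Measurable g →
    (∃ C, ∀ x, |f x| ≤ C) → (∃ C, ∀ x, |g x| ≤ C) →
    Monotone f → Monotone g →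
    (∫ ω, f (fun i => decide (ω ∈ A i)) * g (fun i => decide (ω ∈ A i)) ∂μ) ≥
      (∫ ω, f (fun i => decide (ω ∈ A i)) ∂μ) * (∫ ω, g (fun i => decide (ω ∈ A i)) ∂μ)

lemma aux_integrable {Ω : Type*} [MeasurableSpace Ω] (μ : Measure Ω) [IsFiniteMeasure μ]
    (h : Ω → ℝ) (hm : Measurable h) (C : ℝ) (hb : ∀ ω, |h ω| ≤ C) : Integrable h μ :=
  ⟨hm.aestronglyMeasurable, HasFiniteIntegral.of_bounded (C := C)
    (ae_of_all _ (fun ω => by simpa using hb ω))⟩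

lemma aux_abs_integral_le {Ω : Type*} [MeasurableSpace Ω] (μ : Measure Ω) [IsProbabilityMeasure μ]
    (h : Ω → ℝ) (hm : Measurable h) (C : ℝ) (hb : ∀ ω, |h ω| ≤ C) :
    |∫ ω, h ω ∂μ| ≤ C := by
  calc |∫ ω, h ω ∂μ| ≤ ∫ ω, |h ω| ∂μ := by
        simpa using norm_integral_le_integral_norm (μ := μ) h
    _ ≤ ∫ _, C ∂μ := integral_mono (aux_integrable μ h hm C hb).abs (integrable_const C)
        (fun ω => hb ω)
    _ = C := by simp

lemma aux_meas_decide {Ω : Type*} [MeasurableSpace Ω] (s : Set Ω) [DecidablePred (· ∈ s)]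
    (hs : MeasurableSet s) : Measurable fun ω => decide (ω ∈ s) := by
  have h : (fun ω => decide (ω ∈ s)) = fun ω => if ω ∈ s then true else false := by
    funext ω; by_cases h : ω ∈ s <;> simp [h]
  rw [h]
  exact Measurable.ite hs measurable_const measurable_const

lemma aux_decide_le {p q : Prop} [Decidable p] [Decidable q] (h : p → q) :
    decide p ≤ decide q := by
  by_cases hp : p
  · simp [hp, h hp]
  · simp [hp]

lemma aux_mul_bound {a b C : ℝ} (ha : |a| ≤ 1) (hb : |b| ≤ C) : |a * b| ≤ C := by
  rw [abs_mul]
  calc |a| * |b| ≤ 1 * C := mul_le_mul ha hb (abs_nonneg _) zero_le_one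
  _ = C := one_mul C


lemma aux_partition {Ω : Type*} [MeasurableSpace Ω] (μ : Measure Ω)
    {Γ : Type*} [Fintype Γ] (R : Ω → Finset Γ)
    (h : Finset Γ → Ω → ℝ)
    (hint : ∀ r, Integrable (fun ω => (if R ω = r then (1:ℝ) else 0) * h r ω) μ) :
    ∫ ω, h (R ω) ω ∂μ = ∑ r : Finset Γ, ∫ ω, (if R ω = r then (1:ℝ) else 0) * h r ω ∂μ := by
  have hpt : ∀ ω, h (R ω) ω = ∑ r : Finset Γ, (if R ω = r then (1:ℝ) else 0) * h r ω := by
    intro ω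
    rw [Finset.sum_eq_single (R ω)]
    · simp
    · intro b _ hb
      rw [if_neg (fun hh => hb hh.symm), zero_mul]
    · intro hmem; exact absurd (Finset.mem_univ _) hmem
  simp_rw [hpt]
  exact integral_finset_sum _ (fun r _ => hint r)

lemma aux_stage2 {Ω : Type*} [MeasurableSpace Ω] (μ : Measure Ω) [IsProbabilityMeasure μ]
    {Γ V : Type*} [Fintype Γ] [Fintype V]
    (R : Ω → Finset Γ)
    (hRassoc : PositivelyAssociated μ (fun i : Γ => {ω | i ∈ R ω}))
    (X : Finset Γ → V → Set Ω)
    (hXmeas : ∀ r i, MeasurableSet (X r i))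
    (hmono : ∀ r r' : Finset Γ, r' ⊆ r → ∀ i : V, X r' i ⊆ X r i)
    (f g : (V → Bool) → ℝ) (hf : Measurable f) (hg : Measurable g)
    (Cf Cg : ℝ) (hCf : ∀ x, |f x| ≤ Cf) (hCg : ∀ x, |g x| ≤ Cg)
    (hfm : Monotone f) (hgm : Monotone g) :
    ∫ ω, (∫ ω', f (fun i => decide (ω' ∈ X (R ω) i)) ∂μ)
        * (∫ ω', g (fun i => decide (ω' ∈ X (R ω) i)) ∂μ) ∂μ
      ≥ (∫ ω, (∫ ω', f (fun i => decide (ω' ∈ X (R ω) i)) ∂μ) ∂μ)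
          * ∫ ω, (∫ ω', g (fun i => decide (ω' ∈ X (R ω) i)) ∂μ) ∂μ := by
  classical
  have hfilt : ∀ r : Finset Γ,
      (Finset.univ.filter fun j : Γ => decide (j ∈ r) = true) = r := by
    intro r; ext j; simp
  have hint : ∀ (φ : (V → Bool) → ℝ) (C : ℝ), Measurable φ → (∀ x, |φ x| ≤ C) →
      ∀ r : Finset Γ, Integrable (fun ω' => φ (fun i => decide (ω' ∈ X r i))) μ :=
    fun φ C hφ hC r => aux_integrable μ _ (hφ.comp (measurable_pi_lambda _ fun i =>
      aux_meas_decide _ (hXmeas r i))) C (fun ω => hC _)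
  have hmonoΦ : ∀ (φ : (V → Bool) → ℝ) (C : ℝ), Measurable φ → (∀ x, |φ x| ≤ C) → Monotone φ →
      Monotone (fun b : Γ → Bool =>
        ∫ ω', φ (fun i => decide (ω' ∈ X (Finset.univ.filter fun j => b j = true) i)) ∂μ) := by
    intro φ C hφ hC hφm b b' hbb
    have hsub : (Finset.univ.filter fun j : Γ => b j = true)
        ⊆ (Finset.univ.filter fun j : Γ => b' j = true) := by
      intro j hj
      simp only [Finset.mem_filter, Finset.mem_univ, true_and] at hj ⊢
      have h2 := hbb j
      rw [hj] at h2
      exact le_antisymm (Bool.le_true _) h2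
    exact integral_mono (hint φ C hφ hC _) (hint φ C hφ hC _)
      (fun ω => hφm (fun i => aux_decide_le (fun h => hmono _ _ hsub i h)))
  have hbndΦ : ∀ (φ : (V → Bool) → ℝ) (C : ℝ), Measurable φ → (∀ x, |φ x| ≤ C) →
      ∀ b : Γ → Bool,
        |∫ ω', φ (fun i => decide (ω' ∈ X (Finset.univ.filter fun j => b j = true) i)) ∂μ| ≤ C :=
    fun φ C hφ hC b => aux_abs_integral_le μ _
      (hφ.comp (measurable_pi_lambda _ fun i => aux_meas_decide _ (hXmeas _ i)))
      C (fun ω => hC _)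
  have h := hRassoc
    (fun b : Γ → Bool =>
      ∫ ω', f (fun i => decide (ω' ∈ X (Finset.univ.filter fun j => b j = true) i)) ∂μ)
    (fun b : Γ → Bool =>
      ∫ ω', g (fun i => decide (ω' ∈ X (Finset.univ.filter fun j => b j = true) i)) ∂μ)
    (measurable_of_countable _) (measurable_of_countable _)
    ⟨Cf, hbndΦ f Cf hf hCf⟩ ⟨Cg, hbndΦ g Cg hg hCg⟩
    (hmonoΦ f Cf hf hCf hfm) (hmonoΦ g Cg hg hCg hgm)
  convert h using 2
  all_goals (congr! <;> (ext j; simp))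

/-- **Lemma (propagation of positive association).**
Let `Γ` and `V` be finite, let `R` be a random subset of `Γ` whose membership
events are positively associated, and let `X r i` (for `r ⊆ Γ`, `i ∈ V`) be
events such that (i) `r' ⊆ r → X r' i ⊆ X r i`, and (ii) for each fixed `r`,
the family `(X r i)_{i ∈ V}` is positively associated and the random vector
`(1_{X r i})_{i ∈ V}` is independent of `R`.  Then the events
`X^R_i = ⋃_r ({R = r} ∩ X r i)`, `i ∈ V`, are positively associated. -/
theorem positivelyAssociated_of_random_subset
    {Ω : Type*} [MeasurableSpace Ω] (μ : Measure Ω) [IsProbabilityMeasure μ]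
    {Γ V : Type*} [Fintype Γ] [Fintype V]
    (R : Ω → Finset Γ)
    (hRmeas : ∀ i : Γ, MeasurableSet {ω | i ∈ R ω})
    (hRassoc : PositivelyAssociated μ (fun i : Γ => {ω | i ∈ R ω}))
    (X : Finset Γ → V → Set Ω)
    (hXmeas : ∀ r i, MeasurableSet (X r i))
    (hmono : ∀ r r' : Finset Γ, r' ⊆ r → ∀ i : V, X r' i ⊆ X r i)
    (hassoc : ∀ r : Finset Γ, PositivelyAssociated μ (X r))
    (hindep : ∀ r : Finset Γ,
      IndepFun (fun ω => fun i : V => decide (ω ∈ X r i))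
               (fun ω => fun i : Γ => decide (i ∈ R ω)) μ) :
    PositivelyAssociated μ (fun i : V => ⋃ r : Finset Γ, {ω | R ω = r} ∩ X r i) := by
  intro f g hf hg hfb hgb hfm hgm
  obtain ⟨Cf, hCf⟩ := hfb
  obtain ⟨Cg, hCg⟩ := hgb
  have hCf0 : 0 ≤ Cf := le_trans (abs_nonneg _) (hCf fun _ => true)
  have hCg0 : 0 ≤ Cg := le_trans (abs_nonneg _) (hCg fun _ => true)
  -- replace the union events by X (R ω)
  have hmem : ∀ (ω : Ω) (i : V),
      (ω ∈ ⋃ r : Finset Γ, {ω | R ω = r} ∩ X r i) ↔ ω ∈ X (R ω) i := by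
    intro ω i
    simp only [Set.mem_iUnion, Set.mem_inter_iff, Set.mem_setOf_eq]
    exact ⟨fun ⟨r, h1, h2⟩ => h1 ▸ h2, fun h => ⟨R ω, rfl, h⟩⟩
  have hY : ∀ ω : Ω, ∀ i : V,
      decide (ω ∈ ⋃ r : Finset Γ, {ω | R ω = r} ∩ X r i) = decide (ω ∈ X (R ω) i) :=
    fun ω i => decide_eq_decide.mpr (hmem ω i)
  -- measurability
  have hXvm : ∀ r : Finset Γ, Measurable fun ω => fun i : V => decide (ω ∈ X r i) :=
    fun r => measurable_pi_lambda _ fun i => aux_meas_decide _ (hXmeas r i)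
  have hRvm : Measurable fun ω => fun i : Γ => decide (i ∈ R ω) :=
    measurable_pi_lambda _ fun i => aux_meas_decide {ω | i ∈ R ω} (hRmeas i)
  have hR_eq : ∀ (ω : Ω) (r : Finset Γ),
      (R ω = r) ↔ ((fun i : Γ => decide (i ∈ R ω)) = fun i : Γ => decide (i ∈ r)) := by
    intro ω r
    constructor
    · rintro rfl; rfl
    · intro h
      ext i
      have h2 := congrFun h i
      simpa only [decide_eq_decide] using h2
  have hsetR : ∀ r : Finset Γ, MeasurableSet {ω | R ω = r} := by
    intro r
    have h1 : {ω | R ω = r}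
        = (fun ω => fun i : Γ => decide (i ∈ R ω)) ⁻¹' {fun i : Γ => decide (i ∈ r)} := by
      ext ω
      simpa using hR_eq ω r
    rw [h1]
    exact hRvm (measurableSet_singleton _)
  have hindm : ∀ r : Finset Γ, Measurable fun ω => (if R ω = r then (1:ℝ) else 0) :=
    fun r => Measurable.ite (hsetR r) measurable_const measurable_const
  have habs_ind : ∀ (r : Finset Γ) (ω : Ω), |if R ω = r then (1:ℝ) else 0| ≤ 1 := by
    intro r ω; split <;> simp
  -- independence splitting
  have hsplit : ∀ (r : Finset Γ) (φ : (V → Bool) → ℝ), Measurable φ →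
      ∫ ω, (if R ω = r then (1:ℝ) else 0) * φ (fun i => decide (ω ∈ X r i)) ∂μ
        = (∫ ω, (if R ω = r then (1:ℝ) else 0) ∂μ)
            * ∫ ω, φ (fun i => decide (ω ∈ X r i)) ∂μ := by
    intro r φ hφ
    have hψm : Measurable
        (fun b : Γ → Bool => if b = (fun i : Γ => decide (i ∈ r)) then (1:ℝ) else 0) :=
      measurable_of_countable _
    have heq : (fun ω => if R ω = r then (1:ℝ) else 0)
        = (fun b : Γ → Bool => if b = (fun i : Γ => decide (i ∈ r)) then (1:ℝ) else 0)
            ∘ (fun ω => fun i : Γ => decide (i ∈ R ω)) := by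
      funext ω
      exact if_congr (hR_eq ω r) rfl rfl
    have hind : IndepFun (fun ω => if R ω = r then (1:ℝ) else 0)
        (fun ω => φ (fun i => decide (ω ∈ X r i))) μ := by
      rw [heq]
      exact ((hindep r).symm).comp hψm hφ
    exact hind.integral_mul_eq_mul_integral (hindm r).aestronglyMeasurable
      ((hφ.comp (hXvm r)).aestronglyMeasurable)
  -- integrability of building blocks
  have hintφ : ∀ (φ : (V → Bool) → ℝ) (C : ℝ), Measurable φ → (∀ x, |φ x| ≤ C) →
      ∀ r : Finset Γ, Integrable (fun ω => φ (fun i => decide (ω ∈ X r i))) μ :=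
    fun φ C hφ hC r => aux_integrable μ _ (hφ.comp (hXvm r)) C (fun ω => hC _)
  have hfg_bound : ∀ x : V → Bool, |f x * g x| ≤ Cf * Cg := fun x => by
    rw [abs_mul]
    exact mul_le_mul (hCf x) (hCg x) (abs_nonneg _) hCf0
  have hFbnd : ∀ r : Finset Γ, |∫ ω, f (fun i => decide (ω ∈ X r i)) ∂μ| ≤ Cf :=
    fun r => aux_abs_integral_le μ _ (hf.comp (hXvm r)) Cf (fun ω => hCf _)
  have hGbnd : ∀ r : Finset Γ, |∫ ω, g (fun i => decide (ω ∈ X r i)) ∂μ| ≤ Cg :=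
    fun r => aux_abs_integral_le μ _ (hg.comp (hXvm r)) Cg (fun ω => hCg _)
  have hFGbnd : ∀ r : Finset Γ,
      |(∫ ω, f (fun i => decide (ω ∈ X r i)) ∂μ) * ∫ ω, g (fun i => decide (ω ∈ X r i)) ∂μ|
        ≤ Cf * Cg := fun r => by
    rw [abs_mul]
    exact mul_le_mul (hFbnd r) (hGbnd r) (abs_nonneg _) hCf0
  have pnn : ∀ r : Finset Γ, 0 ≤ ∫ ω, (if R ω = r then (1:ℝ) else 0) ∂μ :=
    fun r => integral_nonneg (fun ω => by split <;> norm_num)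
  -- marginal identity: E[Φ(R)] = E[φ(X^R)]
  have hmarg : ∀ (φ : (V → Bool) → ℝ) (C : ℝ), Measurable φ → (∀ x, |φ x| ≤ C) →
      ∫ ω, (∫ ω', φ (fun i => decide (ω' ∈ X (R ω) i)) ∂μ) ∂μ
        = ∫ ω, φ (fun i => decide (ω ∈ X (R ω) i)) ∂μ := by
    intro φ C hφ hC
    have hCb : ∀ r : Finset Γ, |∫ ω', φ (fun i => decide (ω' ∈ X r i)) ∂μ| ≤ C :=
      fun r => aux_abs_integral_le μ _ (hφ.comp (hXvm r)) C (fun ω => hC _)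
    rw [aux_partition μ R (fun r _ => ∫ ω', φ (fun i => decide (ω' ∈ X r i)) ∂μ)
        (fun r => aux_integrable μ _ ((hindm r).mul measurable_const) C
          (fun ω => aux_mul_bound (habs_ind r ω) (hCb r))),
      aux_partition μ R (fun r ω => φ (fun i => decide (ω ∈ X r i)))
        (fun r => aux_integrable μ _ ((hindm r).mul (hφ.comp (hXvm r))) C
          (fun ω => aux_mul_bound (habs_ind r ω) (hC _)))]
    refine Finset.sum_congr rfl fun r _ => ?_
    rw [hsplit r φ hφ, integral_mul_const]
  -- main chain
  calc
    ∫ ω, f (fun i => decide (ω ∈ ⋃ r : Finset Γ, {ω | R ω = r} ∩ X r i))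
        * g (fun i => decide (ω ∈ ⋃ r : Finset Γ, {ω | R ω = r} ∩ X r i)) ∂μ
      = ∫ ω, f (fun i => decide (ω ∈ X (R ω) i)) * g (fun i => decide (ω ∈ X (R ω) i)) ∂μ := by
        simp only [hY]
    _ = ∑ r : Finset Γ, ∫ ω, (if R ω = r then (1:ℝ) else 0)
          * (f (fun i => decide (ω ∈ X r i)) * g (fun i => decide (ω ∈ X r i))) ∂μ :=
        aux_partition μ R
          (fun r ω => f (fun i => decide (ω ∈ X r i)) * g (fun i => decide (ω ∈ X r i)))
          (fun r => aux_integrable μ _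
            ((hindm r).mul ((hf.comp (hXvm r)).mul (hg.comp (hXvm r)))) (Cf * Cg)
            (fun ω => aux_mul_bound (habs_ind r ω) (hfg_bound _)))
    _ = ∑ r : Finset Γ, (∫ ω, (if R ω = r then (1:ℝ) else 0) ∂μ)
          * ∫ ω, f (fun i => decide (ω ∈ X r i)) * g (fun i => decide (ω ∈ X r i)) ∂μ :=
        Finset.sum_congr rfl fun r _ => hsplit r (fun x => f x * g x) (hf.mul hg)
    _ ≥ ∑ r : Finset Γ, (∫ ω, (if R ω = r then (1:ℝ) else 0) ∂μ)
          * ((∫ ω, f (fun i => decide (ω ∈ X r i)) ∂μ)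
              * ∫ ω, g (fun i => decide (ω ∈ X r i)) ∂μ) :=
        Finset.sum_le_sum fun r _ => mul_le_mul_of_nonneg_left
          (hassoc r f g hf hg ⟨Cf, hCf⟩ ⟨Cg, hCg⟩ hfm hgm) (pnn r)
    _ = ∑ r : Finset Γ, ∫ ω, (if R ω = r then (1:ℝ) else 0)
          * ((∫ ω', f (fun i => decide (ω' ∈ X r i)) ∂μ)
              * ∫ ω', g (fun i => decide (ω' ∈ X r i)) ∂μ) ∂μ :=
        Finset.sum_congr rfl fun r _ => (integral_mul_const _ _).symm
    _ = ∫ ω, (∫ ω', f (fun i => decide (ω' ∈ X (R ω) i)) ∂μ)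
          * ∫ ω', g (fun i => decide (ω' ∈ X (R ω) i)) ∂μ ∂μ :=
        (aux_partition μ R
          (fun r _ => (∫ ω', f (fun i => decide (ω' ∈ X r i)) ∂μ)
              * ∫ ω', g (fun i => decide (ω' ∈ X r i)) ∂μ)
          (fun r => aux_integrable μ _ ((hindm r).mul measurable_const) (Cf * Cg)
            (fun ω => aux_mul_bound (habs_ind r ω) (hFGbnd r)))).symm
    _ ≥ (∫ ω, (∫ ω', f (fun i => decide (ω' ∈ X (R ω) i)) ∂μ) ∂μ)
          * ∫ ω, (∫ ω', g (fun i => decide (ω' ∈ X (R ω) i)) ∂μ) ∂μ :=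
        aux_stage2 μ R hRassoc X hXmeas hmono f g hf hg Cf Cg hCf hCg hfm hgm
    _ = (∫ ω, f (fun i => decide (ω ∈ X (R ω) i)) ∂μ)
          * ∫ ω, g (fun i => decide (ω ∈ X (R ω) i)) ∂μ := by
        rw [hmarg f Cf hf hCf, hmarg g Cg hg hCg]
    _ = (∫ ω, f (fun i => decide (ω ∈ ⋃ r : Finset Γ, {ω | R ω = r} ∩ X r i)) ∂μ)
          * ∫ ω, g (fun i => decide (ω ∈ ⋃ r : Finset Γ, {ω | R ω = r} ∩ X r i)) ∂μ := by
        simp only [hY]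
end

section
/- Let G be a finite simple graph whose edges are randomly and independently oriented, with arbitrary orientation probabilities p_e ∈ [0,1] for each edge e. Then for every set of vertices S, the events {S ⇝ i}, i ∈ V, are positively associated: for all bounded measurable increasing functions f, g : (V → Bool) → ℝ, writing X(ω)(i) = true iff {S ⇝ i} holds in ω, one has E[f(X)g(X)] ≥ E[f(X)]·E[g(X)]. -/
open MeasureTheory ProbabilityTheory
open scoped Classical

variable {V : Type*} [Fintype V] [LinearOrder V]

/-- The edge set of `G`, identified with pairs `(i, j)` with `i < j` and `i ~ j`. -/
def EdgeIdx (G : SimpleGraph V) : Type _ :=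
  {e : V × V // e.1 < e.2 ∧ G.Adj e.1 e.2}

noncomputable instance (G : SimpleGraph V) : Fintype (EdgeIdx G) := by
  classical exact (Subtype.fintype _)

instance (G : SimpleGraph V) : MeasurableSpace (EdgeIdx G → Bool) := by infer_instance

/-- The Bernoulli measure on `Bool`: `true` has probability `p`,
`false` has probability `1 - p`. -/
noncomputable def bern (p : ℝ) : Measure Bool :=
  (ENNReal.ofReal p) • Measure.dirac true + (ENNReal.ofReal (1 - p)) • Measure.dirac false

instance (p : ℝ) : IsFiniteMeasure (bern p) := by
  constructor
  simp only [bern, Measure.add_apply, Measure.smul_apply, smul_eq_mul]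
  exact ENNReal.add_lt_top.mpr
    ⟨ENNReal.mul_lt_top ENNReal.ofReal_lt_top (by simp),
     ENNReal.mul_lt_top ENNReal.ofReal_lt_top (by simp)⟩

/-- The random orientation measure on `Ω = EdgeIdx G → Bool`: the coordinates are
independent, and the coordinate of edge `e = (i,j)` (with `i < j`) equals `true`
(edge oriented from `i` to `j`) with probability `p e`. -/
noncomputable def orientationMeasure (G : SimpleGraph V) (p : EdgeIdx G → ℝ) :
    Measure (EdgeIdx G → Bool) :=
  Measure.pi fun e => bern (p e)

/-- One oriented step: there is an edge between `a` and `b`, oriented from `a` to `b`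
in the configuration `ω`. -/
def OStep {G : SimpleGraph V} (ω : EdgeIdx G → Bool) (a b : V) : Prop :=
  ∃ e : EdgeIdx G, (ω e = true ∧ e.1.1 = a ∧ e.1.2 = b) ∨ (ω e = false ∧ e.1.1 = b ∧ e.1.2 = a)

/-- `a ⇝ b` in configuration `ω`: `(a, b)` is in the reflexive transitive closure of
the oriented edge relation. -/
def Reaches {G : SimpleGraph V} (ω : EdgeIdx G → Bool) (a b : V) : Prop :=
  Relation.ReflTransGen (OStep ω) a b

section Aux

variable {G : SimpleGraph V}

/-- Oriented step using only edges in `F`. -/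
def OStepF (F : Finset (EdgeIdx G)) (ω : EdgeIdx G → Bool) (a b : V) : Prop :=
  ∃ e ∈ F, (ω e = true ∧ e.1.1 = a ∧ e.1.2 = b) ∨ (ω e = false ∧ e.1.1 = b ∧ e.1.2 = a)

def ReachSet (F : Finset (EdgeIdx G)) (ω : EdgeIdx G → Bool) (T : Set V) : Set V :=
  {x | ∃ s ∈ T, Relation.ReflTransGen (OStepF F ω) s x}

noncomputable def XX (F : Finset (EdgeIdx G)) (T : Set V) (ω : EdgeIdx G → Bool) : V → Bool :=
  fun i => decide (i ∈ ReachSet F ω T)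

lemma reflTransGen_congr {α : Type*} {r r' : α → α → Prop}
    (h : ∀ a b, r a b ↔ r' a b) {a b : α} :
    Relation.ReflTransGen r a b ↔ Relation.ReflTransGen r' a b :=
  ⟨Relation.ReflTransGen.mono (fun x y hxy => (h x y).mp hxy) a b,
   Relation.ReflTransGen.mono (fun x y hxy => (h x y).mpr hxy) a b⟩

lemma ostepF_congr {F : Finset (EdgeIdx G)} {ω ω' : EdgeIdx G → Bool}
    (h : ∀ e ∈ F, ω e = ω' e) (a b : V) : OStepF F ω a b ↔ OStepF F ω' a b := by
  constructor
  · rintro ⟨e, heF, he⟩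
    exact ⟨e, heF, by rwa [h e heF] at he⟩
  · rintro ⟨e, heF, he⟩
    exact ⟨e, heF, by rwa [h e heF]⟩

lemma reachSet_congr {F : Finset (EdgeIdx G)} {ω ω' : EdgeIdx G → Bool}
    (h : ∀ e ∈ F, ω e = ω' e) (T : Set V) : ReachSet F ω T = ReachSet F ω' T := by
  unfold ReachSet
  ext x
  exact exists_congr fun s => and_congr_right fun _ => reflTransGen_congr (ostepF_congr h)

lemma reachSet_mono {F : Finset (EdgeIdx G)} {ω : EdgeIdx G → Bool} {T T' : Set V}
    (h : T ⊆ T') : ReachSet F ω T ⊆ ReachSet F ω T' := by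
  rintro x ⟨s, hs, hr⟩; exact ⟨s, h hs, hr⟩

/-- Generic lemma: adding a single step `u → v` to a relation, with `u ∈ T` or `v ∈ T`,
amounts to enlarging the source set by `v`. -/
lemma reach_union_step {α : Type*} (r : α → α → Prop) (u v : α) (T : Set α)
    (huv : u ∈ T ∨ v ∈ T) :
    {x | ∃ s ∈ T, Relation.ReflTransGen (fun a b => r a b ∨ (a = u ∧ b = v)) s x}
      = {x | ∃ s ∈ T ∪ {v}, Relation.ReflTransGen r s x} := by
  ext x
  simp only [Set.mem_setOf_eq]
  constructor
  · rintro ⟨s, hs, hr⟩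
    induction hr with
    | refl => exact ⟨s, Or.inl hs, .refl⟩
    | @tail b c _h₁ h₂ ih =>
      rcases h₂ with h₂ | ⟨_, hcv⟩
      · obtain ⟨t, ht, htr⟩ := ih
        exact ⟨t, ht, htr.tail h₂⟩
      · exact ⟨c, Or.inr hcv, .refl⟩
  · rintro ⟨s, hs, hr⟩
    have hr' : Relation.ReflTransGen (fun a b => r a b ∨ (a = u ∧ b = v)) s x :=
      Relation.ReflTransGen.mono (fun a b hab => Or.inl hab) _ _ hr
    rcases hs with hs | hs
    · exact ⟨s, hs, hr'⟩
    · have hsv : s = v := hs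
      rcases huv with hu | hv
      · refine ⟨u, hu, Relation.ReflTransGen.trans ?_ hr'⟩
        exact Relation.ReflTransGen.single (Or.inr ⟨rfl, hsv⟩)
      · exact ⟨v, hv, hsv ▸ hr'⟩

lemma ostepF_erase_true {F : Finset (EdgeIdx G)} {ω : EdgeIdx G → Bool} {e : EdgeIdx G}
    (heF : e ∈ F) (hb : ω e = true) (a b : V) :
    OStepF F ω a b ↔ (OStepF (F.erase e) ω a b ∨ (a = e.1.1 ∧ b = e.1.2)) := by
  constructor
  · rintro ⟨e', he'F, he'⟩
    by_cases h : e' = e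
    · subst h
      rcases he' with ⟨_, h1, h2⟩ | ⟨hfalse, _, _⟩
      · exact Or.inr ⟨h1.symm, h2.symm⟩
      · rw [hb] at hfalse; exact absurd hfalse (by simp)
    · exact Or.inl ⟨e', Finset.mem_erase.mpr ⟨h, he'F⟩, he'⟩
  · rintro (⟨e', he'F, he'⟩ | ⟨rfl, rfl⟩)
    · exact ⟨e', Finset.mem_of_mem_erase he'F, he'⟩
    · exact ⟨e, heF, Or.inl ⟨hb, rfl, rfl⟩⟩

lemma ostepF_erase_false {F : Finset (EdgeIdx G)} {ω : EdgeIdx G → Bool} {e : EdgeIdx G}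
    (heF : e ∈ F) (hb : ω e = false) (a b : V) :
    OStepF F ω a b ↔ (OStepF (F.erase e) ω a b ∨ (a = e.1.2 ∧ b = e.1.1)) := by
  constructor
  · rintro ⟨e', he'F, he'⟩
    by_cases h : e' = e
    · subst h
      rcases he' with ⟨htrue, _, _⟩ | ⟨_, h1, h2⟩
      · rw [hb] at htrue; exact absurd htrue (by simp)
      · exact Or.inr ⟨h2.symm, h1.symm⟩
    · exact Or.inl ⟨e', Finset.mem_erase.mpr ⟨h, he'F⟩, he'⟩
  · rintro (⟨e', he'F, he'⟩ | ⟨rfl, rfl⟩)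
    · exact ⟨e', Finset.mem_of_mem_erase he'F, he'⟩
    · exact ⟨e, heF, Or.inr ⟨hb, rfl, rfl⟩⟩

lemma reachSet_true {F : Finset (EdgeIdx G)} {ω : EdgeIdx G → Bool} {e : EdgeIdx G}
    {T : Set V} (heF : e ∈ F) (hb : ω e = true) (hT : e.1.1 ∈ T ∨ e.1.2 ∈ T) :
    ReachSet F ω T = ReachSet (F.erase e) ω (T ∪ {e.1.2}) := by
  have h1 : ReachSet F ω T
      = {x | ∃ s ∈ T, Relation.ReflTransGen
          (fun a b => OStepF (F.erase e) ω a b ∨ (a = e.1.1 ∧ b = e.1.2)) s x} := by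
    unfold ReachSet
    ext x
    exact exists_congr fun s => and_congr_right fun _ =>
      reflTransGen_congr (ostepF_erase_true heF hb)
  rw [h1, reach_union_step _ _ _ _ hT]
  rfl

lemma reachSet_false {F : Finset (EdgeIdx G)} {ω : EdgeIdx G → Bool} {e : EdgeIdx G}
    {T : Set V} (heF : e ∈ F) (hb : ω e = false) (hT : e.1.1 ∈ T ∨ e.1.2 ∈ T) :
    ReachSet F ω T = ReachSet (F.erase e) ω (T ∪ {e.1.1}) := by
  have h1 : ReachSet F ω T
      = {x | ∃ s ∈ T, Relation.ReflTransGen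
          (fun a b => OStepF (F.erase e) ω a b ∨ (a = e.1.2 ∧ b = e.1.1)) s x} := by
    unfold ReachSet
    ext x
    exact exists_congr fun s => and_congr_right fun _ =>
      reflTransGen_congr (ostepF_erase_false heF hb)
  rw [h1, reach_union_step _ _ _ _ hT.symm]
  rfl

lemma reachSet_of_not_touch {F : Finset (EdgeIdx G)} {ω : EdgeIdx G → Bool} {T : Set V}
    (h : ∀ e ∈ F, e.1.1 ∉ T ∧ e.1.2 ∉ T) : ReachSet F ω T = T := by
  ext x
  constructor
  · rintro ⟨s, hs, hr⟩
    rcases hr.cases_head with rfl | ⟨y, hy, _⟩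
    · exact hs
    · obtain ⟨e, heF, he⟩ := hy
      rcases he with ⟨_, h1, _⟩ | ⟨_, _, h2⟩
      · exact absurd (h1 ▸ hs) (h e heF).1
      · exact absurd (h2 ▸ hs) (h e heF).2
  · intro hx
    exact ⟨x, hx, .refl⟩

/-! ### Weighted sums -/

variable (p : EdgeIdx G → ℝ)

noncomputable def wt (e : EdgeIdx G) : Bool → ℝ
  | true => p e
  | false => 1 - p e

noncomputable def Wt (ω : EdgeIdx G → Bool) : ℝ := ∏ e, wt p e (ω e)

noncomputable def EXP (h : (EdgeIdx G → Bool) → ℝ) : ℝ :=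
  ∑ ω : EdgeIdx G → Bool, Wt p ω * h ω

variable {p}

lemma wt_nonneg (hp0 : ∀ e, 0 ≤ p e) (hp1 : ∀ e, p e ≤ 1) (e : EdgeIdx G) (b : Bool) :
    0 ≤ wt p e b := by
  cases b <;> simp [wt] <;> [linarith [hp1 e]; exact hp0 e]

lemma Wt_nonneg (hp0 : ∀ e, 0 ≤ p e) (hp1 : ∀ e, p e ≤ 1) (ω : EdgeIdx G → Bool) :
    0 ≤ Wt p ω :=
  Finset.prod_nonneg fun e _ => wt_nonneg hp0 hp1 e (ω e)

lemma sum_Wt : ∑ ω : EdgeIdx G → Bool, Wt p ω = 1 := by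
  have h1 : ∑ ω : EdgeIdx G → Bool, Wt p ω
      = ∑ ω ∈ Fintype.piFinset (fun _ : EdgeIdx G => (Finset.univ : Finset Bool)),
          ∏ e, wt p e (ω e) := by
    rw [Fintype.piFinset_univ]; rfl
  rw [h1, ← Finset.prod_univ_sum]
  have h2 : ∀ e : EdgeIdx G, ∑ b ∈ (Finset.univ : Finset Bool), wt p e b = 1 := by
    intro e
    rw [Fintype.sum_bool]
    simp [wt]
  rw [Finset.prod_congr rfl fun e _ => h2 e, Finset.prod_const_one]

lemma EXP_const (c : ℝ) : EXP p (fun _ => c) = c := by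
  unfold EXP
  rw [← Finset.sum_mul, sum_Wt, one_mul]

lemma EXP_mono (hp0 : ∀ e, 0 ≤ p e) (hp1 : ∀ e, p e ≤ 1)
    {h₁ h₂ : (EdgeIdx G → Bool) → ℝ} (h : ∀ ω, h₁ ω ≤ h₂ ω) : EXP p h₁ ≤ EXP p h₂ :=
  Finset.sum_le_sum fun ω _ => mul_le_mul_of_nonneg_left (h ω) (Wt_nonneg hp0 hp1 ω)

lemma peel (e : EdgeIdx G) (h : (EdgeIdx G → Bool) → ℝ) :
    EXP p h = p e * EXP p (fun ω => h (Function.update ω e true))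
      + (1 - p e) * EXP p (fun ω => h (Function.update ω e false)) := by
  have hrest : ∀ ω ω' : EdgeIdx G → Bool, (∀ e' ≠ e, ω e' = ω' e') →
      ∏ e' ∈ Finset.univ.erase e, wt p e' (ω e')
        = ∏ e' ∈ Finset.univ.erase e, wt p e' (ω' e') :=
    fun ω ω' hh => Finset.prod_congr rfl fun e' he' => by
      rw [hh e' (Finset.ne_of_mem_erase he')]
  set flip : (EdgeIdx G → Bool) → (EdgeIdx G → Bool) :=
    fun ω => Function.update ω e (!ω e) with hflip
  have hinv : Function.Involutive flip := by
    intro ω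
    simp only [hflip, Function.update_self, Function.update_idem, Bool.not_not,
      Function.update_eq_self]
  -- RHS as a single EXP
  have hRHS : p e * EXP p (fun ω => h (Function.update ω e true))
      + (1 - p e) * EXP p (fun ω => h (Function.update ω e false))
      = ∑ ω : EdgeIdx G → Bool, Wt p ω *
          (p e * h (Function.update ω e true) + (1 - p e) * h (Function.update ω e false)) := by
    unfold EXP
    rw [Finset.mul_sum, Finset.mul_sum, ← Finset.sum_add_distrib]
    exact Finset.sum_congr rfl fun ω _ => by ring
  rw [hRHS]
  -- now pointwise-pairing argument
  set F1 : (EdgeIdx G → Bool) → ℝ := fun ω => Wt p ω * h ω with hF1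
  set G1 : (EdgeIdx G → Bool) → ℝ := fun ω => Wt p ω *
      (p e * h (Function.update ω e true) + (1 - p e) * h (Function.update ω e false)) with hG1
  have hsumflip : ∀ k : (EdgeIdx G → Bool) → ℝ,
      ∑ ω : EdgeIdx G → Bool, k (flip ω) = ∑ ω : EdgeIdx G → Bool, k ω :=
    fun k => Fintype.sum_bijective flip hinv.bijective _ _ (fun ω => rfl)
  have hpoint : ∀ ω, F1 ω + F1 (flip ω) = G1 ω + G1 (flip ω) := by
    intro ω
    have hWt : ∀ ω' : EdgeIdx G → Bool,
        Wt p ω' = wt p e (ω' e) * ∏ e' ∈ Finset.univ.erase e, wt p e' (ω' e') :=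
      fun ω' => (Finset.mul_prod_erase Finset.univ _ (Finset.mem_univ e)).symm
    have hR : ∀ b, ∏ e' ∈ Finset.univ.erase e, wt p e' (Function.update ω e b e')
        = ∏ e' ∈ Finset.univ.erase e, wt p e' (ω e') :=
      fun b => hrest _ _ fun e' he' => Function.update_of_ne he' b ω
    have hWtb : ∀ b, Wt p (Function.update ω e b)
        = wt p e b * ∏ e' ∈ Finset.univ.erase e, wt p e' (ω e') := by
      intro b
      rw [hWt, Function.update_self, hR b]
    have hWtω : Wt p ω = wt p e (ω e) * ∏ e' ∈ Finset.univ.erase e, wt p e' (ω e') := hWt ω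
    have hfe : flip ω = Function.update ω e (!ω e) := rfl
    have hidem : ∀ b b' : Bool, Function.update (Function.update ω e b) e b'
        = Function.update ω e b' := fun b b' => by simp [Function.update_idem]
    have hωeq : h ω = h (Function.update ω e (ω e)) := by rw [Function.update_eq_self]
    simp only [hF1, hG1, hfe, hWtb, hidem, hWtω]
    rw [hωeq]
    cases hb : ω e
    · simp only [hb, Bool.not_false, wt]
      ring
    · simp only [hb, Bool.not_true, wt]
      ring
  have h2 : (2 : ℝ) * ∑ ω : EdgeIdx G → Bool, F1 ω
      = 2 * ∑ ω : EdgeIdx G → Bool, G1 ω := by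
    have e1 : (2 : ℝ) * ∑ ω : EdgeIdx G → Bool, F1 ω
        = ∑ ω : EdgeIdx G → Bool, (F1 ω + F1 (flip ω)) := by
      rw [Finset.sum_add_distrib, hsumflip F1]; ring
    have e2 : (2 : ℝ) * ∑ ω : EdgeIdx G → Bool, G1 ω
        = ∑ ω : EdgeIdx G → Bool, (G1 ω + G1 (flip ω)) := by
      rw [Finset.sum_add_distrib, hsumflip G1]; ring
    rw [e1, e2]
    exact Finset.sum_congr rfl fun ω _ => hpoint ω
  have := mul_left_cancel₀ (two_ne_zero) h2
  exact this

lemma xx_le {F : Finset (EdgeIdx G)} {T T' : Set V} (h : T ⊆ T') (ω : EdgeIdx G → Bool) :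
    XX F T ω ≤ XX F T' ω := by
  intro i
  unfold XX
  by_cases hP : i ∈ ReachSet F ω T
  · simp [hP, reachSet_mono h hP]
  · simp [hP]

theorem main_ineq (hp0 : ∀ e, 0 ≤ p e) (hp1 : ∀ e, p e ≤ 1)
    (F : Finset (EdgeIdx G)) :
    ∀ (T : Set V) (f g : (V → Bool) → ℝ), Monotone f → Monotone g →
      EXP p (fun ω => f (XX F T ω) * g (XX F T ω)) ≥
        EXP p (fun ω => f (XX F T ω)) * EXP p (fun ω => g (XX F T ω)) := by
  induction F using Finset.strongInduction with
  | _ F ih =>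
    intro T f g hf hg
    by_cases hE : ∃ e ∈ F, e.1.1 ∈ T ∨ e.1.2 ∈ T
    · obtain ⟨e, heF, hend⟩ := hE
      have hss : F.erase e ⊂ F := Finset.erase_ssubset heF
      have hXt : ∀ ω, XX F T (Function.update ω e true)
          = XX (F.erase e) (T ∪ {e.1.2}) ω := by
        intro ω
        have h1 : ReachSet F (Function.update ω e true) T
            = ReachSet (F.erase e) ω (T ∪ {e.1.2}) := by
          rw [reachSet_true heF (Function.update_self e true ω) hend]
          exact reachSet_congr
            (fun e' he' => Function.update_of_ne (Finset.ne_of_mem_erase he') true ω) _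
        unfold XX
        rw [h1]
      have hXf : ∀ ω, XX F T (Function.update ω e false)
          = XX (F.erase e) (T ∪ {e.1.1}) ω := by
        intro ω
        have h1 : ReachSet F (Function.update ω e false) T
            = ReachSet (F.erase e) ω (T ∪ {e.1.1}) := by
          rw [reachSet_false heF (Function.update_self e false ω) hend]
          exact reachSet_congr
            (fun e' he' => Function.update_of_ne (Finset.ne_of_mem_erase he') false ω) _
        unfold XX
        rw [h1]
      have hcomp : (T ∪ {e.1.1} : Set V) ⊆ T ∪ {e.1.2} ∨ (T ∪ {e.1.2} : Set V) ⊆ T ∪ {e.1.1} := by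
        rcases hend with h | h
        · left
          refine Set.union_subset Set.subset_union_left ?_
          intro x hx
          obtain rfl := Set.mem_singleton_iff.mp hx
          exact Or.inl h
        · right
          refine Set.union_subset Set.subset_union_left ?_
          intro x hx
          obtain rfl := Set.mem_singleton_iff.mp hx
          exact Or.inl h
      rw [peel e (fun ω => f (XX F T ω) * g (XX F T ω)),
          peel e (fun ω => f (XX F T ω)), peel e (fun ω => g (XX F T ω))]
      simp only [hXt, hXf]
      have hA := ih _ hss (T ∪ {e.1.2}) f g hf hg
      have hB := ih _ hss (T ∪ {e.1.1}) f g hf hg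
      have hmono : ∀ (k : (V → Bool) → ℝ), Monotone k →
          ∀ {T1 T2 : Set V}, T1 ⊆ T2 →
          EXP p (fun ω => k (XX (F.erase e) T1 ω)) ≤ EXP p (fun ω => k (XX (F.erase e) T2 ω)) :=
        fun k hk _ _ h12 => EXP_mono hp0 hp1 fun ω => hk (xx_le h12 ω)
      have hsign : 0 ≤ (EXP p (fun ω => f (XX (F.erase e) (T ∪ {e.1.2}) ω))
            - EXP p (fun ω => f (XX (F.erase e) (T ∪ {e.1.1}) ω)))
          * (EXP p (fun ω => g (XX (F.erase e) (T ∪ {e.1.2}) ω))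
            - EXP p (fun ω => g (XX (F.erase e) (T ∪ {e.1.1}) ω))) := by
        rcases hcomp with h | h
        · exact mul_nonneg (sub_nonneg.mpr (hmono f hf h)) (sub_nonneg.mpr (hmono g hg h))
        · have h1 := sub_nonpos.mpr (hmono f hf h)
          have h2 := sub_nonpos.mpr (hmono g hg h)
          nlinarith [mul_nonneg (neg_nonneg.mpr h1) (neg_nonneg.mpr h2)]
      have hq0 : (0:ℝ) ≤ p e := hp0 e
      have hq1 : (0:ℝ) ≤ 1 - p e := by linarith [hp1 e]
      nlinarith [mul_nonneg (mul_nonneg hq0 hq1) hsign,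
        mul_le_mul_of_nonneg_left hA hq0, mul_le_mul_of_nonneg_left hB hq1]
    · push_neg at hE
      have hconst : ∀ ω : EdgeIdx G → Bool, XX F T ω = fun i => decide (i ∈ T) := by
        intro ω
        unfold XX
        rw [reachSet_of_not_touch hE]
      simp only [hconst]
      rw [EXP_const, EXP_const, EXP_const]

lemma integral_eq_EXP (hp0 : ∀ e, 0 ≤ p e) (hp1 : ∀ e, p e ≤ 1)
    (h : (EdgeIdx G → Bool) → ℝ) :
    ∫ ω, h ω ∂(orientationMeasure G p) = EXP p h := by
  haveI : IsFiniteMeasure (orientationMeasure G p) := by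
    unfold orientationMeasure; infer_instance
  rw [integral_fintype (Integrable.of_finite)]
  unfold EXP
  refine Finset.sum_congr rfl fun ω _ => ?_
  have hμ : orientationMeasure G p {ω} = ∏ e, bern (p e) {ω e} := by
    rw [orientationMeasure, ← Set.univ_pi_singleton ω, Measure.pi_pi]
  rw [measureReal_def, hμ, smul_eq_mul]
  congr 1
  rw [ENNReal.toReal_prod]
  refine Finset.prod_congr rfl fun e _ => ?_
  cases hb : ω e
  · have : bern (p e) {false} = ENNReal.ofReal (1 - p e) := by
      simp [bern, Measure.dirac_apply']
    rw [this, ENNReal.toReal_ofReal (by linarith [hp1 e])]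
    simp [wt]
  · have : bern (p e) {true} = ENNReal.ofReal (p e) := by
      simp [bern, Measure.dirac_apply']
    rw [this, ENNReal.toReal_ofReal (hp0 e)]
    simp [wt]


end Aux

/-- **Theorem (positive association of the percolation cluster).**
If the edges of a finite graph are independently oriented (edge `e` oriented
upwards with arbitrary probability `p e ∈ [0,1]`), then for any source set `S`,
the events `{S ⇝ i}`, `i ∈ V`, are positively associated. -/
theorem positivelyAssociated_reaches_from_source
    (G : SimpleGraph V) (p : EdgeIdx G → ℝ)
    (hp0 : ∀ e, 0 ≤ p e) (hp1 : ∀ e, p e ≤ 1) (S : Set V) :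
    PositivelyAssociated (orientationMeasure G p)
      (fun i : V => {ω : EdgeIdx G → Bool | ∃ s ∈ S, Reaches ω s i}) := by
  intro f g _ _ _ _ hf hg
  have hXfun : ∀ ω : EdgeIdx G → Bool,
      (fun i : V => decide (ω ∈ {ω' : EdgeIdx G → Bool | ∃ s ∈ S, Reaches ω' s i}))
        = XX Finset.univ S ω := by
    intro ω
    funext i
    apply decide_eq_decide.mpr
    show (∃ s ∈ S, Reaches ω s i) ↔ i ∈ ReachSet Finset.univ ω S
    refine exists_congr fun s => and_congr_right fun _ => reflTransGen_congr fun a b => ?_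
    exact ⟨fun ⟨e, he⟩ => ⟨e, Finset.mem_univ e, he⟩, fun ⟨e, _, he⟩ => ⟨e, he⟩⟩
  have hI : ∀ k : (V → Bool) → ℝ,
      (∫ ω, k (fun i => decide (ω ∈ {ω' : EdgeIdx G → Bool | ∃ s ∈ S, Reaches ω' s i}))
          ∂(orientationMeasure G p))
        = EXP p (fun ω => k (XX Finset.univ S ω)) := by
    intro k
    have heq : (fun ω : EdgeIdx G → Bool =>
          k (fun i => decide (ω ∈ {ω' : EdgeIdx G → Bool | ∃ s ∈ S, Reaches ω' s i})))
        = fun ω => k (XX Finset.univ S ω) := funext fun ω => by rw [hXfun ω]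
    rw [heq]
    exact integral_eq_EXP hp0 hp1 (fun ω => k (XX Finset.univ S ω))
  have hX2 : ∀ (ω : EdgeIdx G → Bool) (i : V) (inst : Decidable (∃ s ∈ S, Reaches ω s i)),
      @decide (∃ s ∈ S, Reaches ω s i) inst = XX Finset.univ S ω i := by
    intro ω i inst
    rw [← congrFun (hXfun ω) i]
    exact decide_eq_decide.mpr (by rw [Set.mem_setOf_eq])
  have hI2 : ∀ k : (V → Bool) → ℝ,
      (∫ ω, k (fun i => XX Finset.univ S ω i) ∂(orientationMeasure G p))
        = EXP p (fun ω => k (XX Finset.univ S ω)) := fun k =>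
    integral_eq_EXP hp0 hp1 (fun ω => k (XX Finset.univ S ω))
  simp only [Set.mem_setOf_eq, hX2]
  rw [hI2 (fun x => f x * g x), hI2 f, hI2 g]
  exact main_ineq hp0 hp1 Finset.univ S f g hf hg
end

section
/- Let G be a finite simple graph whose edges are randomly and independently oriented, with arbitrary orientation probabilities p_e ∈ [0,1] for each edge e. Then for every target set of vertices T, the events {i ⇝ T}, i ∈ V, are positively associated, where {i ⇝ T} is the event that there is a directed path from i to some t ∈ T. -/
open MeasureTheory ProbabilityTheory
open scoped Classical

variable {V : Type*} [Fintype V] [LinearOrder V]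

/-! Induction on the set of edges still in play. If no remaining edge touches the target set `T`,
the reach indicator is the deterministic vector `1_T`. Otherwise take an edge `{u, v}` with
`v ∈ T` and condition on its orientation: if `u → v`, delete the edge and add `u` to `T`; if
`v → u`, delete the edge, which no path to `T` needs. Both conditional laws are the same model on
fewer edges, and their target sets are nested, so the conditional means of two monotone functions
are ordered in the same direction; Chebyshev's inequality for the two-point mixture closes the
induction. -/

theorem PositivelyAssociated.of_integral_mul_le {Ω I : Type*} [MeasurableSpace Ω] {μ : Measure Ω}
    {A : I → Set Ω} (X : Ω → I → Bool) (hX : ∀ ω i, ω ∈ A i ↔ X ω i = true)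
    (h : ∀ f g : (I → Bool) → ℝ, Monotone f → Monotone g →
      (∫ ω, f (X ω) ∂μ) * (∫ ω, g (X ω) ∂μ) ≤ ∫ ω, f (X ω) * g (X ω) ∂μ) :
    PositivelyAssociated μ A := by
  intro f g _ _ _ _ hf hg
  have hdecide : ∀ ω, (fun i => decide (ω ∈ A i)) = X ω := fun ω =>
    funext fun i => by simp [hX]
  simp only [hdecide]
  exact h f g hf hg

namespace RandomOrientation

open Finset Function Relation

section BernoulliWeight

variable {ι : Type*} [Fintype ι]

noncomputable def bernWeight (p : ι → ℝ) (ω : ι → Bool) : ℝ :=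
  ∏ i, if ω i then p i else 1 - p i

theorem bernWeight_nonneg {p : ι → ℝ} (hp0 : ∀ i, 0 ≤ p i) (hp1 : ∀ i, p i ≤ 1)
    (ω : ι → Bool) : 0 ≤ bernWeight p ω :=
  prod_nonneg fun i _ => by cases ω i <;> simp [hp0 i, hp1 i]

theorem sum_bernWeight (p : ι → ℝ) : ∑ ω, bernWeight p ω = 1 := by
  calc ∑ ω, bernWeight p ω = ∏ i, ∑ b : Bool, if b then p i else 1 - p i :=
        (Fintype.prod_sum fun i (b : Bool) => if b then p i else 1 - p i).symm
    _ = 1 := prod_eq_one fun i _ => by simp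

theorem sum_bernWeight_mul (p : ι → ℝ) (e : ι) (H : (ι → Bool) → ℝ) :
    ∑ ω, bernWeight p ω * H ω =
      p e * ∑ ω, bernWeight p ω * H (update ω e true) +
        (1 - p e) * ∑ ω, bernWeight p ω * H (update ω e false) := by
  let σ := (Equiv.funSplitAt e Bool).symm
  let R : ({ j // j ≠ e } → Bool) → ℝ := fun ρ => ∏ j, if ρ j then p j else 1 - p j
  have hweight : ∀ b ρ, bernWeight p (σ (b, ρ)) = (if b then p e else 1 - p e) * R ρ := by
    intro b ρ
    rw [bernWeight, Fintype.prod_eq_mul_prod_subtype_ne _ e]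
    congr 1
    · simp [σ]
    · exact prod_congr rfl fun j _ => by simp [σ, j.2]
  have hupdate : ∀ b ρ c, update (σ (b, ρ)) e c = σ (c, ρ) := by
    intro b ρ c
    funext j
    by_cases hj : j = e
    · subst hj; simp [σ]
    · simp [σ, hj]
  have hsplit : ∀ K : (ι → Bool) → ℝ, ∑ ω, K ω = ∑ b, ∑ ρ, K (σ (b, ρ)) := fun K => by
    rw [← σ.sum_comp, Fintype.sum_prod_type]
  have hcond : ∀ c, ∑ ω, bernWeight p ω * H (update ω e c) = ∑ ρ, R ρ * H (σ (c, ρ)) := by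
    intro c
    simp only [hsplit (fun ω => bernWeight p ω * H (update ω e c)), hweight, hupdate,
      Fintype.sum_bool, if_true, Bool.false_eq_true, if_false, mul_assoc, ← mul_sum]
    ring
  rw [hcond, hcond, hsplit]
  simp only [hweight, Fintype.sum_bool, if_true, Bool.false_eq_true, if_false, mul_assoc, ← mul_sum]

end BernoulliWeight

theorem two_point_mixture_mul_le {q q' X₁ X₀ x₁ x₀ y₁ y₀ : ℝ} (hq : 0 ≤ q) (hq' : 0 ≤ q')
    (hqq' : q + q' = 1) (h₁ : x₁ * y₁ ≤ X₁) (h₀ : x₀ * y₀ ≤ X₀)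
    (hxy : 0 ≤ (x₁ - x₀) * (y₁ - y₀)) :
    (q * x₁ + q' * x₀) * (q * y₁ + q' * y₀) ≤ q * X₁ + q' * X₀ := by
  -- as `q + q' = 1`, the left side is `q x₁ y₁ + q' x₀ y₀ - q q' (x₁ - x₀) (y₁ - y₀)`
  obtain rfl : q' = 1 - q := by linarith
  nlinarith [mul_nonneg (mul_nonneg hq hq') hxy, mul_nonneg hq (sub_nonneg.2 h₁),
    mul_nonneg hq' (sub_nonneg.2 h₀)]

/-- The target set left once the arc `u → v` is deleted: `u` reached `T` through it iff `v ∈ T`. -/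
def absorb {α : Type*} (T : Set α) (u v : α) : Set α := if v ∈ T then insert u T else T

theorem subset_absorb {α : Type*} (T : Set α) (u v : α) : T ⊆ absorb T u v := by
  unfold absorb
  split_ifs
  exacts [Set.subset_insert u T, subset_rfl]

theorem absorb_subset_or_subset {α : Type*} {T : Set α} {u v : α} (h : u ∈ T ∨ v ∈ T) :
    absorb T u v ⊆ absorb T v u ∨ absorb T v u ⊆ absorb T u v := by
  unfold absorb
  split_ifs <;> simp_all [Set.insert_eq_of_mem, Set.subset_insert]

section Reachability

variable {V : Type*} [LinearOrder V] {G : SimpleGraph V}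

def tail (ω : EdgeIdx G → Bool) (e : EdgeIdx G) : V := if ω e then e.1.1 else e.1.2

def head (ω : EdgeIdx G → Bool) (e : EdgeIdx G) : V := if ω e then e.1.2 else e.1.1

def StepIn (A : Finset (EdgeIdx G)) (ω : EdgeIdx G → Bool) (a b : V) : Prop :=
  ∃ e ∈ A, tail ω e = a ∧ head ω e = b

def ReachesIn (A : Finset (EdgeIdx G)) (ω : EdgeIdx G → Bool) (T : Set V) (x : V) : Prop :=
  ∃ t ∈ T, ReflTransGen (StepIn A ω) x t

noncomputable def reachIndicator (A : Finset (EdgeIdx G)) (ω : EdgeIdx G → Bool) (T : Set V) :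
    V → Bool :=
  fun x => decide (ReachesIn A ω T x)

theorem StepIn.mono {A B : Finset (EdgeIdx G)} (hAB : A ⊆ B) {ω : EdgeIdx G → Bool} {a b : V}
    (h : StepIn A ω a b) : StepIn B ω a b :=
  let ⟨e, he, hab⟩ := h
  ⟨e, hAB he, hab⟩

theorem stepIn_update_of_notMem {A : Finset (EdgeIdx G)} {e : EdgeIdx G} (he : e ∉ A)
    (ω : EdgeIdx G → Bool) (b : Bool) : StepIn A (update ω e b) = StepIn A ω := by
  ext x y
  unfold StepIn
  refine exists_congr fun e' => and_congr_right fun he' => ?_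
  rw [tail, head, tail, head, update_of_ne (ne_of_mem_of_not_mem he' he)]

theorem reachIndicator_update_of_notMem {A : Finset (EdgeIdx G)} {e : EdgeIdx G} (he : e ∉ A)
    (ω : EdgeIdx G → Bool) (b : Bool) (T : Set V) :
    reachIndicator A (update ω e b) T = reachIndicator A ω T := by
  unfold reachIndicator ReachesIn
  rw [stepIn_update_of_notMem he]

theorem reachIndicator_mono {A : Finset (EdgeIdx G)} {ω : EdgeIdx G → Bool} {T T' : Set V}
    (hT : T ⊆ T') : reachIndicator A ω T ≤ reachIndicator A ω T' := by
  intro x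
  simp only [reachIndicator, Bool.le_iff_imp, decide_eq_true_eq]
  exact fun ⟨t, ht, hxt⟩ => ⟨t, hT ht, hxt⟩

theorem reachesIn_iff_erase {A : Finset (EdgeIdx G)} {e : EdgeIdx G} (he : e ∈ A)
    {T : Set V} (hT : e.1.1 ∈ T ∨ e.1.2 ∈ T) (ω : EdgeIdx G → Bool) (x : V) :
    ReachesIn A ω T x ↔ ReachesIn (A.erase e) ω (absorb T (tail ω e) (head ω e)) x := by
  have hend : tail ω e ∈ T ∨ head ω e ∈ T := by
    unfold tail head
    cases ω e <;> simp [hT, or_comm]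
  constructor
  · rintro ⟨t, ht, hxt⟩
    induction hxt using ReflTransGen.head_induction_on with
    | refl => exact ⟨t, subset_absorb _ _ _ ht, .refl⟩
    | head hstep _ ih =>
      obtain ⟨e', he', rfl, rfl⟩ := hstep
      by_cases hee : e' = e
      · subst hee
        refine ⟨tail ω e', ?_, .refl⟩
        unfold absorb
        split_ifs <;> simp_all
      · obtain ⟨t', ht', hp'⟩ := ih
        exact ⟨t', ht', hp'.head ⟨e', mem_erase.2 ⟨hee, he'⟩, rfl, rfl⟩⟩
  · rintro ⟨t, ht, hxt⟩
    have hxt' := ReflTransGen.mono (fun _ _ => StepIn.mono (erase_subset e A)) _ _ hxt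
    unfold absorb at ht
    split_ifs at ht with hv
    · rcases ht with rfl | ht
      · exact ⟨head ω e, hv, hxt'.tail ⟨e, he, rfl, rfl⟩⟩
      · exact ⟨t, ht, hxt'⟩
    · exact ⟨t, ht, hxt'⟩

theorem reachIndicator_of_forall_notMem {A : Finset (EdgeIdx G)} {T : Set V}
    (hA : ∀ e ∈ A, e.1.1 ∉ T ∧ e.1.2 ∉ T) (ω : EdgeIdx G → Bool) :
    reachIndicator A ω T = fun x => decide (x ∈ T) := by
  funext x
  refine decide_eq_decide.2 ⟨fun ⟨t, ht, hxt⟩ => ?_, fun hx => ⟨x, hx, .refl⟩⟩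
  rcases hxt.cases_tail with rfl | ⟨y, -, e, he, -, rfl⟩
  · exact ht
  · unfold head at ht
    split_ifs at ht
    exacts [absurd ht (hA e he).2, absurd ht (hA e he).1]

end Reachability

section Expectation

variable {G : SimpleGraph V} {p : EdgeIdx G → ℝ}

noncomputable def expectReach (p : EdgeIdx G → ℝ) (A : Finset (EdgeIdx G)) (T : Set V)
    (F : (V → Bool) → ℝ) : ℝ :=
  ∑ ω, bernWeight p ω * F (reachIndicator A ω T)

theorem expectReach_mono (hp0 : ∀ e, 0 ≤ p e) (hp1 : ∀ e, p e ≤ 1) {A : Finset (EdgeIdx G)}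
    {T T' : Set V} (hT : T ⊆ T') {F : (V → Bool) → ℝ} (hF : Monotone F) :
    expectReach p A T F ≤ expectReach p A T' F :=
  sum_le_sum fun ω _ =>
    mul_le_mul_of_nonneg_left (hF (reachIndicator_mono hT)) (bernWeight_nonneg hp0 hp1 ω)

theorem expectReach_of_forall_notMem {A : Finset (EdgeIdx G)} {T : Set V}
    (hA : ∀ e ∈ A, e.1.1 ∉ T ∧ e.1.2 ∉ T) (F : (V → Bool) → ℝ) :
    expectReach p A T F = F fun x => decide (x ∈ T) := by
  simp only [expectReach, reachIndicator_of_forall_notMem hA, ← sum_mul, sum_bernWeight, one_mul]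

theorem expectReach_eq_erase {A : Finset (EdgeIdx G)} {e : EdgeIdx G} (he : e ∈ A) {T : Set V}
    (hT : e.1.1 ∈ T ∨ e.1.2 ∈ T) (F : (V → Bool) → ℝ) :
    expectReach p A T F =
      p e * expectReach p (A.erase e) (absorb T e.1.1 e.1.2) F +
        (1 - p e) * expectReach p (A.erase e) (absorb T e.1.2 e.1.1) F := by
  have h : ∀ ω b, reachIndicator A (update ω e b) T =
      reachIndicator (A.erase e) ω (absorb T (tail (update ω e b) e) (head (update ω e b) e)) := by
    intro ω b
    rw [← reachIndicator_update_of_notMem (notMem_erase e A) ω b]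
    funext x
    exact decide_eq_decide.2 (reachesIn_iff_erase he hT _ x)
  rw [expectReach, sum_bernWeight_mul p e]
  simp only [h, tail, head, update_self, if_true, Bool.false_eq_true, if_false]
  rfl

theorem expectReach_mul_expectReach_le (hp0 : ∀ e, 0 ≤ p e) (hp1 : ∀ e, p e ≤ 1)
    (A : Finset (EdgeIdx G)) (T : Set V) {f g : (V → Bool) → ℝ} (hf : Monotone f)
    (hg : Monotone g) : expectReach p A T f * expectReach p A T g ≤ expectReach p A T (f * g) := by
  induction A using Finset.strongInduction generalizing T with
  | H A ih =>
    by_cases hinc : ∃ e ∈ A, e.1.1 ∈ T ∨ e.1.2 ∈ T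
    · obtain ⟨e, he, hT⟩ := hinc
      have hA := erase_ssubset he
      simp only [expectReach_eq_erase he hT]
      refine two_point_mixture_mul_le (hp0 e) (sub_nonneg.2 (hp1 e)) (by ring)
        (ih _ hA _) (ih _ hA _) ?_
      rcases absorb_subset_or_subset hT with h | h
      · exact mul_nonneg_of_nonpos_of_nonpos (sub_nonpos.2 (expectReach_mono hp0 hp1 h hf))
          (sub_nonpos.2 (expectReach_mono hp0 hp1 h hg))
      · exact mul_nonneg (sub_nonneg.2 (expectReach_mono hp0 hp1 h hf))
          (sub_nonneg.2 (expectReach_mono hp0 hp1 h hg))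
    · push Not at hinc
      simp only [expectReach_of_forall_notMem hinc, Pi.mul_apply, le_refl]

theorem stepIn_univ (ω : EdgeIdx G → Bool) : StepIn univ ω = OStep ω := by
  funext a b
  refine propext (exists_congr fun e => ?_)
  unfold tail head
  cases ω e <;> simp [and_comm]

instance : IsFiniteMeasure (orientationMeasure G p) :=
  inferInstanceAs (IsFiniteMeasure (Measure.pi _))

theorem measureReal_orientationMeasure_singleton (hp0 : ∀ e, 0 ≤ p e) (hp1 : ∀ e, p e ≤ 1)
    (ω : EdgeIdx G → Bool) :
    (orientationMeasure G p).real {ω} = bernWeight p ω := by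
  rw [measureReal_def, ← Set.univ_pi_singleton, orientationMeasure, Measure.pi_pi,
    ENNReal.toReal_prod]
  refine prod_congr rfl fun e _ => ?_
  cases ω e <;> simp [bern, ENNReal.toReal_ofReal, hp0 e, hp1 e]

theorem integral_orientationMeasure (hp0 : ∀ e, 0 ≤ p e) (hp1 : ∀ e, p e ≤ 1)
    (F : (EdgeIdx G → Bool) → ℝ) :
    ∫ ω, F ω ∂orientationMeasure G p = ∑ ω, bernWeight p ω * F ω := by
  rw [integral_fintype .of_finite]
  simp only [smul_eq_mul, measureReal_orientationMeasure_singleton hp0 hp1]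

end Expectation

end RandomOrientation

open RandomOrientation in
/-- **Corollary (positive association towards a target set).**
If the edges of a finite graph are independently oriented (edge `e` oriented
upwards with arbitrary probability `p e ∈ [0,1]`), then for any target set `T`,
the events `{i ⇝ T}`, `i ∈ V`, are positively associated. -/
theorem positivelyAssociated_reaches_to_target
    (G : SimpleGraph V) (p : EdgeIdx G → ℝ)
    (hp0 : ∀ e, 0 ≤ p e) (hp1 : ∀ e, p e ≤ 1) (T : Set V) :
    PositivelyAssociated (orientationMeasure G p)
      (fun i : V => {ω : EdgeIdx G → Bool | ∃ t ∈ T, Reaches ω i t}) := by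
  refine PositivelyAssociated.of_integral_mul_le (fun ω => reachIndicator Finset.univ ω T)
    (fun ω i => ?_) fun f g hf hg => ?_
  · simp [reachIndicator, ReachesIn, stepIn_univ, Reaches]
  · simp only [integral_orientationMeasure hp0 hp1]
    exact expectReach_mul_expectReach_le hp0 hp1 Finset.univ T hf hg
end

section
/- Let G be a simple graph with countable (possibly infinite) vertex set V whose edges are randomly and independently oriented, with arbitrary orientation probabilities p_e ∈ [0,1] for each edge e. Let f and g be nonnegative bounded measurable increasing functions on (V → Bool) that each depend only on finitely many coordinates (i.e., there is a finite U ⊆ V such that the value of the function at x depends only on the restriction of x to U). Then, for any source set S ⊆ V, writing X(ω)(i) = true iff {S ⇝ i} holds in ω, one has E[f(X)g(X)] ≥ E[f(X)]·E[g(X)]. -/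
set_option linter.unusedSectionVars false
set_option linter.unusedVariables false
set_option maxHeartbeats 1000000


open MeasureTheory ProbabilityTheory
open scoped Classical

variable {V : Type*} [Countable V] [LinearOrder V]

section Aux

variable {G : SimpleGraph V}

/-- One oriented step using only edges from the finite set `A`. -/
def RStep (A : Finset (EdgeIdx G)) (ω : EdgeIdx G → Bool) (a b : V) : Prop :=
  ∃ e ∈ A, (ω e = true ∧ e.1.1 = a ∧ e.1.2 = b) ∨ (ω e = false ∧ e.1.1 = b ∧ e.1.2 = a)

/-- Reachability using only edges from the finite set `A`. -/
def RReach (A : Finset (EdgeIdx G)) (ω : EdgeIdx G → Bool) (a b : V) : Prop :=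
  Relation.ReflTransGen (RStep A ω) a b

lemma RReach.mono {A B : Finset (EdgeIdx G)} (hAB : A ⊆ B) {ω : EdgeIdx G → Bool} {a b : V}
    (h : RReach A ω a b) : RReach B ω a b :=
  Relation.ReflTransGen.mono (r := RStep A ω) (p := RStep B ω) (fun x y ⟨e, he, h'⟩ => ⟨e, hAB he, h'⟩) a b h

lemma reaches_iff_finset {ω : EdgeIdx G → Bool} {a b : V} :
    Reaches ω a b ↔ ∃ A : Finset (EdgeIdx G), RReach A ω a b := by
  constructor
  · intro h
    induction h with
    | refl => exact ⟨∅, Relation.ReflTransGen.refl⟩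
    | tail h' step ih =>
      obtain ⟨A, hA⟩ := ih
      obtain ⟨e, he⟩ := step
      exact ⟨insert e A, (hA.mono (Finset.subset_insert e A)).tail
        ⟨e, Finset.mem_insert_self e A, he⟩⟩
  · rintro ⟨A, hA⟩
    exact Relation.ReflTransGen.mono (r := RStep A ω) (p := OStep ω) (fun x y ⟨e, _, h'⟩ => ⟨e, h'⟩) a b hA

lemma RReach_congr {A : Finset (EdgeIdx G)} {ω ω' : EdgeIdx G → Bool}
    (h : ∀ e ∈ A, ω e = ω' e) {a b : V} : RReach A ω a b ↔ RReach A ω' a b := by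
  have key : ∀ (ω ω' : EdgeIdx G → Bool), (∀ e ∈ A, ω e = ω' e) →
      RReach A ω a b → RReach A ω' a b := by
    intro ω ω' h hr
    refine Relation.ReflTransGen.mono (r := RStep A ω) (p := RStep A ω') (fun x y ⟨e, he, h'⟩ => ⟨e, he, ?_⟩) a b hr
    rwa [h e he] at h'
  exact ⟨key ω ω' h, key ω' ω fun e he => (h e he).symm⟩

/-- The state `X` restricted to reachability along edges in `A`. -/
noncomputable def XA (A : Finset (EdgeIdx G)) (S : Set V) (ω : EdgeIdx G → Bool) : V → Bool :=
  fun i => decide (∃ s ∈ S, RReach A ω s i)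

lemma XA_congr {A : Finset (EdgeIdx G)} (S : Set V) {ω ω' : EdgeIdx G → Bool}
    (h : ∀ e ∈ A, ω e = ω' e) : XA A S ω = XA A S ω' := by
  funext i
  refine decide_eq_decide.2 ⟨?_, ?_⟩
  · rintro ⟨s, hs, hr⟩; exact ⟨s, hs, (RReach_congr h).1 hr⟩
  · rintro ⟨s, hs, hr⟩; exact ⟨s, hs, (RReach_congr h).2 hr⟩

end Aux
section Aux2
variable {G : SimpleGraph V}

/-- Head of edge `e` when oriented according to `b`. -/
def eHead (e : EdgeIdx G) (b : Bool) : V := if b then e.1.2 else e.1.1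
/-- Tail of edge `e` when oriented according to `b`. -/
def eTail (e : EdgeIdx G) (b : Bool) : V := if b then e.1.1 else e.1.2

/-- The new source set after conditioning edge `e` to have orientation `b`. -/
def bSrc (e : EdgeIdx G) (S : Set V) (b : Bool) : Set V :=
  if eTail e b ∈ S then insert (eHead e b) S else S

lemma subset_bSrc (e : EdgeIdx G) (S : Set V) (b : Bool) : S ⊆ bSrc e S b := by
  unfold bSrc; split
  · exact Set.subset_insert _ _
  · exact subset_rfl

lemma reach_erase {A : Finset (EdgeIdx G)} {e : EdgeIdx G} (he : e ∈ A)
    {S : Set V} (hS : e.1.1 ∈ S ∨ e.1.2 ∈ S) {b : Bool} {ω : EdgeIdx G → Bool}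
    (hω : ω e = b) (v : V) :
    (∃ s ∈ S, RReach A ω s v) ↔ ∃ s ∈ bSrc e S b, RReach (A.erase e) ω s v := by
  constructor
  · rintro ⟨s, hs, hr⟩
    induction hr with
    | refl => exact ⟨s, subset_bSrc e S b hs, Relation.ReflTransGen.refl⟩
    | @tail x y hxy step ih =>
      obtain ⟨s', hs', hr'⟩ := ih
      obtain ⟨e', he', hor⟩ := step
      by_cases hee : e' = e
      · subst hee
        -- the step is along the conditioned edge `e'`, with orientation b
        have hy : y = eHead e' b := by
          rcases hor with ⟨ht, h1, h2⟩ | ⟨ht, h1, h2⟩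
          · rw [hω] at ht; subst ht; simp [eHead, h2]
          · rw [hω] at ht; subst ht; simp [eHead, h1]
        by_cases htl : eTail e' b ∈ S
        · refine ⟨y, ?_, Relation.ReflTransGen.refl⟩
          unfold bSrc; rw [if_pos htl]; exact hy ▸ Set.mem_insert _ _
        · have hhd : eHead e' b ∈ S := by
            rcases hS with h | h
            · cases b
              · exact h
              · exact absurd h (by simpa [eTail] using htl)
            · cases b
              · exact absurd h (by simpa [eTail] using htl)
              · exact h
          refine ⟨y, ?_, Relation.ReflTransGen.refl⟩
          exact subset_bSrc e' S b (hy ▸ hhd)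
      · exact ⟨s', hs', hr'.tail ⟨e', Finset.mem_erase.2 ⟨hee, he'⟩, hor⟩⟩
  · rintro ⟨s, hs, hr⟩
    have hr' : RReach A ω s v := hr.mono (Finset.erase_subset e A)
    unfold bSrc at hs
    split at hs
    · rcases Set.mem_insert_iff.1 hs with rfl | hs
      · rename_i htl
        refine ⟨eTail e b, htl, Relation.ReflTransGen.head ?_ hr'⟩
        refine ⟨e, he, ?_⟩
        cases b
        · exact Or.inr ⟨hω, rfl, rfl⟩
        · exact Or.inl ⟨hω, rfl, rfl⟩
      · exact ⟨s, hs, hr'⟩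
    · exact ⟨s, hs, hr'⟩

lemma reach_trivial {A : Finset (EdgeIdx G)} {S : Set V}
    (h : ∀ e ∈ A, e.1.1 ∉ S ∧ e.1.2 ∉ S) {ω : EdgeIdx G → Bool} (v : V) :
    (∃ s ∈ S, RReach A ω s v) ↔ v ∈ S := by
  constructor
  · rintro ⟨s, hs, hr⟩
    induction hr with
    | refl => exact hs
    | @tail x y hxy step ih =>
      obtain ⟨e, he, hor⟩ := step
      rcases hor with ⟨_, h1, h2⟩ | ⟨_, h1, h2⟩
      · exact absurd (h1 ▸ ih) (h e he).1
      · exact absurd (h2 ▸ ih) (h e he).2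
  · intro hv; exact ⟨v, hv, Relation.ReflTransGen.refl⟩

lemma XA_mono_src {A : Finset (EdgeIdx G)} {S S' : Set V} (h : S ⊆ S')
    (ω : EdgeIdx G → Bool) : XA A S ω ≤ XA A S' ω := by
  intro i
  unfold XA
  cases hd : decide (∃ s ∈ S, RReach A ω s i) with
  | false => exact Bool.false_le _
  | true =>
    obtain ⟨s, hs, hr⟩ := of_decide_eq_true hd
    rw [decide_eq_true ⟨s, h hs, hr⟩]

/-- `bSrc e S true` and `bSrc e S false` are always comparable when `e` touches `S`. -/
lemma bSrc_comparable (e : EdgeIdx G) {S : Set V} (hS : e.1.1 ∈ S ∨ e.1.2 ∈ S) :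
    bSrc e S false ⊆ bSrc e S true ∨ bSrc e S true ⊆ bSrc e S false := by
  have h1t : bSrc e S true = if e.1.1 ∈ S then insert e.1.2 S else S := rfl
  have h1f : bSrc e S false = if e.1.2 ∈ S then insert e.1.1 S else S := rfl
  rw [h1t, h1f]
  by_cases h1 : e.1.1 ∈ S <;> by_cases h2 : e.1.2 ∈ S
  · left; rw [if_pos h1, if_pos h2, Set.insert_eq_self.2 h1, Set.insert_eq_self.2 h2]
  · left; rw [if_pos h1, if_neg h2]; exact Set.subset_insert _ _
  · right; rw [if_neg h1, if_pos h2]; exact Set.subset_insert _ _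
  · exact absurd hS (by tauto)
end Aux2
section Aux3
variable {G : SimpleGraph V}

lemma measurable_of_depOnly (A : Finset (EdgeIdx G)) (φ : (EdgeIdx G → Bool) → ℝ)
    (hdep : ∀ ω ω', (∀ a ∈ A, ω a = ω' a) → φ ω = φ ω') : Measurable φ := by
  have hφ : φ = (fun σ : ↥A → Bool => φ (fun e => if he : e ∈ A then σ ⟨e, he⟩ else false)) ∘
      (fun ω (a : ↥A) => ω a.1) := by
    funext ω
    exact hdep ω _ (fun a ha => by rw [dif_pos ha])
  rw [hφ]
  exact Measurable.of_discrete.comp (measurable_pi_lambda _ fun a => measurable_pi_apply a.1)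

lemma indep_coord (μ : Measure (EdgeIdx G → Bool))
    (hindep : iIndepFun
      (fun e ω => ω e) μ)
    {e : EdgeIdx G} {A : Finset (EdgeIdx G)} (he : e ∉ A)
    (φ ψ : (EdgeIdx G → Bool) → ℝ)
    (hφ : ∀ ω ω', ω e = ω' e → φ ω = φ ω')
    (hψ : ∀ ω ω', (∀ a ∈ A, ω a = ω' a) → ψ ω = ψ ω') :
    IndepFun φ ψ μ := by
  have base := hindep.indepFun_finset {e} A
    (by simp [Finset.disjoint_left, he]) (fun i => measurable_pi_apply i)
  have h1 : φ = (fun σ : ↥({e} : Finset (EdgeIdx G)) → Bool =>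
      φ (fun a => if h : a = e then σ ⟨e, Finset.mem_singleton_self e⟩ else false)) ∘
      (fun ω (i : ↥({e} : Finset (EdgeIdx G))) => ω i.1) := by
    funext ω
    exact hφ ω _ (by simp)
  have h2 : ψ = (fun σ : ↥A → Bool => ψ (fun a => if h : a ∈ A then σ ⟨a, h⟩ else false)) ∘
      (fun ω (a : ↥A) => ω a.1) := by
    funext ω
    exact hψ ω _ (fun a ha => by rw [dif_pos ha])
  rw [h1, h2]
  exact base.comp Measurable.of_discrete Measurable.of_discrete

lemma integrable_of_bounds (μ : Measure (EdgeIdx G → Bool)) [IsProbabilityMeasure μ]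
    (φ : (EdgeIdx G → Bool) → ℝ) (hm : Measurable φ) (C : ℝ)
    (h0 : ∀ ω, 0 ≤ φ ω) (hC : ∀ ω, φ ω ≤ C) : Integrable φ μ := by
  refine (integrable_const C).mono' hm.aestronglyMeasurable ?_
  filter_upwards with ω
  rw [Real.norm_eq_abs, abs_of_nonneg (h0 ω)]
  exact hC ω

lemma integral_cond (μ : Measure (EdgeIdx G → Bool)) [IsProbabilityMeasure μ]
    (hindep : iIndepFun
      (fun e ω => ω e) μ)
    {e : EdgeIdx G} {A : Finset (EdgeIdx G)} (he : e ∉ A) (b : Bool)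
    (φ : (EdgeIdx G → Bool) → ℝ)
    (hdep : ∀ ω ω', (∀ a ∈ A, ω a = ω' a) → φ ω = φ ω') (hint : Integrable φ μ) :
    ∫ ω, (if ω e = b then φ ω else 0) ∂μ = (μ {ω | ω e = b}).toReal * ∫ ω, φ ω ∂μ := by
  have hms : MeasurableSet {ω : EdgeIdx G → Bool | ω e = b} := by
    exact (measurable_pi_apply (X := fun _ : EdgeIdx G => Bool) e) (measurableSet_singleton b)
  have hImeas : Measurable (fun ω : EdgeIdx G → Bool => if ω e = b then (1:ℝ) else 0) :=
    (Measurable.of_discrete (f := fun x : Bool => if x = b then (1:ℝ) else 0)).comp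
      (measurable_pi_apply e)
  have hIint : Integrable (fun ω : EdgeIdx G → Bool => if ω e = b then (1:ℝ) else 0) μ :=
    integrable_of_bounds μ _ hImeas 1 (fun ω => by positivity) (fun ω => by split <;> norm_num)
  have hindepIφ : IndepFun (fun ω : EdgeIdx G → Bool => if ω e = b then (1:ℝ) else 0) φ μ :=
    indep_coord μ hindep he _ _ (fun ω ω' h => by rw [h]) hdep
  have heq : (fun ω : EdgeIdx G → Bool => if ω e = b then φ ω else 0)
      = fun ω => (if ω e = b then (1:ℝ) else 0) * φ ω := by
    funext ω; by_cases h : ω e = b <;> simp [h]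
  rw [heq, show (fun ω : EdgeIdx G → Bool => (if ω e = b then (1:ℝ) else 0) * φ ω)
      = (fun ω : EdgeIdx G → Bool => if ω e = b then (1:ℝ) else 0) * φ from rfl,
    hindepIφ.integral_mul_eq_mul_integral hIint.aestronglyMeasurable hint.aestronglyMeasurable]
  congr 1
  have hind : (fun ω : EdgeIdx G → Bool => if ω e = b then (1:ℝ) else 0)
      = Set.indicator {ω | ω e = b} (fun _ => (1:ℝ)) := by
    funext ω; simp [Set.indicator_apply, Set.mem_setOf_eq]
  rw [hind, integral_indicator_const (1:ℝ) hms, smul_eq_mul, mul_one, Measure.real]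

end Aux3
section Aux4
variable {G : SimpleGraph V}

omit [Countable V] [LinearOrder V] in
lemma mix_ineq (p q a1 a2 b1 b2 i1 i2 : ℝ) (hp : 0 ≤ p) (hq : 0 ≤ q) (hpq : p + q = 1)
    (h1 : i1 ≥ a1 * b1) (h2 : i2 ≥ a2 * b2) (hΔ : (a1 - a2) * (b1 - b2) ≥ 0) :
    p * i1 + q * i2 ≥ (p * a1 + q * a2) * (p * b1 + q * b2) := by
  have hq' : q = 1 - p := by linarith
  subst hq'
  nlinarith [mul_le_mul_of_nonneg_left h1 hp, mul_le_mul_of_nonneg_left h2 hq,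
    mul_nonneg (mul_nonneg hp hq) hΔ]

lemma fin_main (μ : Measure (EdgeIdx G → Bool)) [IsProbabilityMeasure μ]
    (hindep : iIndepFun
      (fun e ω => ω e) μ)
    (f g : (V → Bool) → ℝ) (Cf Cg : ℝ)
    (hf0 : ∀ x, 0 ≤ f x) (hg0 : ∀ x, 0 ≤ g x)
    (hfb : ∀ x, f x ≤ Cf) (hgb : ∀ x, g x ≤ Cg)
    (hfmono : Monotone f) (hgmono : Monotone g)
    (A : Finset (EdgeIdx G)) :
    ∀ S : Set V,
      (∫ ω, f (XA A S ω) * g (XA A S ω) ∂μ) ≥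
        (∫ ω, f (XA A S ω) ∂μ) * ∫ ω, g (XA A S ω) ∂μ := by
  induction A using Finset.strongInductionOn with
  | _ A ih =>
  intro S
  by_cases hex : ∃ e ∈ A, e.1.1 ∈ S ∨ e.1.2 ∈ S
  · obtain ⟨e, he, hS⟩ := hex
    set A' := A.erase e with hA'
    have heA' : e ∉ A' := Finset.notMem_erase e A
    have hXb : ∀ (b : Bool) (ω : EdgeIdx G → Bool), ω e = b →
        XA A S ω = XA A' (bSrc e S b) ω := by
      intro b ω hω
      funext i
      exact decide_eq_decide.2 (reach_erase he hS hω i)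
    have hmsb : ∀ b : Bool, MeasurableSet {ω : EdgeIdx G → Bool | ω e = b} := by
      intro b
      exact (measurable_pi_apply (X := fun _ : EdgeIdx G => Bool) e) (measurableSet_singleton b)
    -- generic facts about functions of `XA A' S'`
    have hdep : ∀ (S' : Set V) (h : (V → Bool) → ℝ) (ω ω' : EdgeIdx G → Bool),
        (∀ a ∈ A', ω a = ω' a) → h (XA A' S' ω) = h (XA A' S' ω') :=
      fun S' h ω ω' hh => by rw [XA_congr S' hh]
    have hmeas : ∀ (S' : Set V) (h : (V → Bool) → ℝ),
        Measurable (fun ω => h (XA A' S' ω)) :=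
      fun S' h => measurable_of_depOnly A' _ (hdep S' h)
    have iF : ∀ S', Integrable (fun ω => f (XA A' S' ω)) μ := fun S' =>
      integrable_of_bounds μ _ (hmeas S' f) Cf (fun ω => hf0 _) (fun ω => hfb _)
    have iG : ∀ S', Integrable (fun ω => g (XA A' S' ω)) μ := fun S' =>
      integrable_of_bounds μ _ (hmeas S' g) Cg (fun ω => hg0 _) (fun ω => hgb _)
    have iFG : ∀ S', Integrable (fun ω => f (XA A' S' ω) * g (XA A' S' ω)) μ := fun S' =>
      integrable_of_bounds μ _ ((hmeas S' f).mul (hmeas S' g)) (Cf * Cg)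
        (fun ω => mul_nonneg (hf0 (XA A' S' ω)) (hg0 (XA A' S' ω)))
        (fun ω => mul_le_mul (hfb (XA A' S' ω)) (hgb (XA A' S' ω)) (hg0 (XA A' S' ω))
          (le_trans (hf0 (XA A' S' ω)) (hfb (XA A' S' ω))))
    -- splitting an integral according to the orientation of `e`
    have split : ∀ (H Ht' Hf' : (EdgeIdx G → Bool) → ℝ),
        (∀ ω, ω e = true → H ω = Ht' ω) → (∀ ω, ω e = false → H ω = Hf' ω) →
        (∀ ω ω', (∀ a ∈ A', ω a = ω' a) → Ht' ω = Ht' ω') →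
        (∀ ω ω', (∀ a ∈ A', ω a = ω' a) → Hf' ω = Hf' ω') →
        Integrable Ht' μ → Integrable Hf' μ →
        ∫ ω, H ω ∂μ = (μ {ω | ω e = true}).toReal * ∫ ω, Ht' ω ∂μ
          + (μ {ω | ω e = false}).toReal * ∫ ω, Hf' ω ∂μ := by
      intro H Ht' Hf' h1 h2 d1 d2 i1 i2
      have hH : (fun ω => H ω)
          = fun ω => (if ω e = true then Ht' ω else 0) + (if ω e = false then Hf' ω else 0) := by
        funext ω
        cases hb : ω e
        · simp [hb, h2 ω hb]
        · simp [hb, h1 ω hb]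
      have eqt : (fun ω : EdgeIdx G → Bool => if ω e = true then Ht' ω else 0)
          = Set.indicator {ω | ω e = true} Ht' := by
        funext ω; simp [Set.indicator_apply, Set.mem_setOf_eq]
      have eqf : (fun ω : EdgeIdx G → Bool => if ω e = false then Hf' ω else 0)
          = Set.indicator {ω | ω e = false} Hf' := by
        funext ω; simp [Set.indicator_apply, Set.mem_setOf_eq]
      have iit : Integrable (fun ω : EdgeIdx G → Bool => if ω e = true then Ht' ω else 0) μ := by
        rw [eqt]; exact i1.indicator (hmsb true)
      have iif : Integrable (fun ω : EdgeIdx G → Bool => if ω e = false then Hf' ω else 0) μ := by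
        rw [eqf]; exact i2.indicator (hmsb false)
      calc ∫ ω, H ω ∂μ
          = ∫ ω, ((if ω e = true then Ht' ω else 0) + (if ω e = false then Hf' ω else 0)) ∂μ := by
            rw [← hH]
        _ = _ := by
            rw [integral_add iit iif, integral_cond μ hindep heA' true Ht' d1 i1,
              integral_cond μ hindep heA' false Hf' d2 i2]
    -- probabilities
    have hpt : 0 ≤ (μ {ω : EdgeIdx G → Bool | ω e = true}).toReal := ENNReal.toReal_nonneg
    have hpf : 0 ≤ (μ {ω : EdgeIdx G → Bool | ω e = false}).toReal := ENNReal.toReal_nonneg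
    have hsum : (μ {ω : EdgeIdx G → Bool | ω e = true}).toReal
        + (μ {ω : EdgeIdx G → Bool | ω e = false}).toReal = 1 := by
      have hdisj : Disjoint {ω : EdgeIdx G → Bool | ω e = true} {ω | ω e = false} := by
        rw [Set.disjoint_left]; intro ω h1 h2; simp_all
      have hunion : {ω : EdgeIdx G → Bool | ω e = true} ∪ {ω | ω e = false} = Set.univ := by
        ext ω; simp only [Set.mem_union, Set.mem_setOf_eq, Set.mem_univ, iff_true]
        cases ω e <;> simp
      have hme : μ {ω : EdgeIdx G → Bool | ω e = true} + μ {ω | ω e = false} = 1 := by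
        rw [← measure_union hdisj (hmsb false), hunion, measure_univ]
      rw [← ENNReal.toReal_add (measure_ne_top μ _) (measure_ne_top μ _), hme, ENNReal.toReal_one]
    -- rewrite the three integrals
    have hsplitFG := split (fun ω => f (XA A S ω) * g (XA A S ω))
      (fun ω => f (XA A' (bSrc e S true) ω) * g (XA A' (bSrc e S true) ω))
      (fun ω => f (XA A' (bSrc e S false) ω) * g (XA A' (bSrc e S false) ω))
      (fun ω hb => by simp only [hXb true ω hb]) (fun ω hb => by simp only [hXb false ω hb])
      (fun ω ω' hh => by beta_reduce; rw [hdep _ f ω ω' hh, hdep _ g ω ω' hh])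
      (fun ω ω' hh => by beta_reduce; rw [hdep _ f ω ω' hh, hdep _ g ω ω' hh])
      (iFG _) (iFG _)
    have hsplitF := split (fun ω => f (XA A S ω))
      (fun ω => f (XA A' (bSrc e S true) ω)) (fun ω => f (XA A' (bSrc e S false) ω))
      (fun ω hb => by simp only [hXb true ω hb]) (fun ω hb => by simp only [hXb false ω hb])
      (hdep _ f) (hdep _ f) (iF _) (iF _)
    have hsplitG := split (fun ω => g (XA A S ω))
      (fun ω => g (XA A' (bSrc e S true) ω)) (fun ω => g (XA A' (bSrc e S false) ω))
      (fun ω hb => by simp only [hXb true ω hb]) (fun ω hb => by simp only [hXb false ω hb])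
      (hdep _ g) (hdep _ g) (iG _) (iG _)
    -- induction hypotheses
    have hIt := ih A' (Finset.erase_ssubset he) (bSrc e S true)
    have hIf := ih A' (Finset.erase_ssubset he) (bSrc e S false)
    -- comparability
    have hcmp : ((∫ ω, f (XA A' (bSrc e S true) ω) ∂μ) - ∫ ω, f (XA A' (bSrc e S false) ω) ∂μ)
        * ((∫ ω, g (XA A' (bSrc e S true) ω) ∂μ) - ∫ ω, g (XA A' (bSrc e S false) ω) ∂μ)
        ≥ 0 := by
      rcases bSrc_comparable e hS with hsub | hsub
      · have h1 : (∫ ω, f (XA A' (bSrc e S false) ω) ∂μ) ≤ ∫ ω, f (XA A' (bSrc e S true) ω) ∂μ :=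
          integral_mono (iF _) (iF _) fun ω => hfmono (XA_mono_src hsub ω)
        have h2 : (∫ ω, g (XA A' (bSrc e S false) ω) ∂μ) ≤ ∫ ω, g (XA A' (bSrc e S true) ω) ∂μ :=
          integral_mono (iG _) (iG _) fun ω => hgmono (XA_mono_src hsub ω)
        exact mul_nonneg (sub_nonneg.2 h1) (sub_nonneg.2 h2)
      · have h1 : (∫ ω, f (XA A' (bSrc e S true) ω) ∂μ) ≤ ∫ ω, f (XA A' (bSrc e S false) ω) ∂μ :=
          integral_mono (iF _) (iF _) fun ω => hfmono (XA_mono_src hsub ω)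
        have h2 : (∫ ω, g (XA A' (bSrc e S true) ω) ∂μ) ≤ ∫ ω, g (XA A' (bSrc e S false) ω) ∂μ :=
          integral_mono (iG _) (iG _) fun ω => hgmono (XA_mono_src hsub ω)
        nlinarith [mul_nonneg (sub_nonneg.2 h1) (sub_nonneg.2 h2)]
    beta_reduce at hsplitFG hsplitF hsplitG
    rw [hsplitFG, hsplitF, hsplitG]
    exact mix_ineq _ _ _ _ _ _ _ _ hpt hpf hsum hIt hIf hcmp
  · push_neg at hex
    have hc : ∀ ω, XA A S ω = fun i => decide (i ∈ S) := by
      intro ω; funext i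
      exact decide_eq_decide.2 (reach_trivial (fun e' he' => hex e' he') i)
    simp only [hc]
    rw [integral_const, integral_const, integral_const, probReal_univ,
      one_smul, one_smul, one_smul]
end Aux4

instance (G : SimpleGraph V) : Countable (EdgeIdx G) :=
  inferInstanceAs (Countable {e : V × V // e.1 < e.2 ∧ G.Adj e.1 e.2})

/-- **Corollary (infinite graphs).**
Let `G` be a (countable, possibly infinite) graph whose edges are independently
oriented: `μ` is a probability measure on `Ω = EdgeIdx G → Bool` under which the
coordinates are independent and the coordinate of edge `e` is `true` with
probability `p e ∈ [0, 1]` (this characterizes the product measure).  If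
`f, g : (V → Bool) → ℝ` are nonnegative, bounded, measurable, increasing and
depend only on finitely many coordinates, then for any source set `S`, writing
`X ω i = true` iff `S ⇝ i` in `ω`, we have `E[f(X) g(X)] ≥ E[f(X)] E[g(X)]`. -/
theorem positive_association_infinite_graph
    (G : SimpleGraph V) (p : EdgeIdx G → ℝ)
    (hp0 : ∀ e, 0 ≤ p e) (hp1 : ∀ e, p e ≤ 1)
    (μ : Measure (EdgeIdx G → Bool)) [IsProbabilityMeasure μ]
    (hindep : iIndepFun
      (fun e ω => ω e) μ)
    (hmarg : ∀ e : EdgeIdx G, μ {ω | ω e = true} = ENNReal.ofReal (p e))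
    (S : Set V)
    (f g : (V → Bool) → ℝ)
    (hfm : Measurable f) (hgm : Measurable g)
    (hf0 : ∀ x, 0 ≤ f x) (hg0 : ∀ x, 0 ≤ g x)
    (hfb : ∃ C, ∀ x, f x ≤ C) (hgb : ∃ C, ∀ x, g x ≤ C)
    (hfmono : Monotone f) (hgmono : Monotone g)
    (hffin : ∃ U : Finset V, ∀ x y : V → Bool, (∀ i ∈ U, x i = y i) → f x = f y)
    (hgfin : ∃ U : Finset V, ∀ x y : V → Bool, (∀ i ∈ U, x i = y i) → g x = g y) :
    (∫ ω, f (fun i => decide (∃ s ∈ S, Reaches ω s i)) *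
          g (fun i => decide (∃ s ∈ S, Reaches ω s i)) ∂μ) ≥
      (∫ ω, f (fun i => decide (∃ s ∈ S, Reaches ω s i)) ∂μ) *
      (∫ ω, g (fun i => decide (∃ s ∈ S, Reaches ω s i)) ∂μ) := by
  obtain ⟨Uf, hUf⟩ := hffin
  obtain ⟨Ug, hUg⟩ := hgfin
  obtain ⟨Cf, hCf⟩ := hfb
  obtain ⟨Cg, hCg⟩ := hgb
  obtain ⟨enc, henc⟩ := exists_injective_nat (EdgeIdx G)
  have hfin : ∀ n : ℕ, (enc ⁻¹' (Set.Iio n)).Finite := fun n =>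
    (Set.finite_Iio n).preimage henc.injOn
  set A : ℕ → Finset (EdgeIdx G) := fun n => (hfin n).toFinset with hA
  have hmono : ∀ {m n : ℕ}, m ≤ n → A m ⊆ A n := by
    intro m n hmn x hx
    simp only [hA, Set.Finite.mem_toFinset, Set.mem_preimage, Set.mem_Iio] at hx ⊢
    exact lt_of_lt_of_le hx hmn
  have habs : ∀ B : Finset (EdgeIdx G), ∃ n, B ⊆ A n := by
    intro B
    refine ⟨B.sup enc + 1, fun x hx => ?_⟩
    simp only [hA, Set.Finite.mem_toFinset, Set.mem_preimage, Set.mem_Iio]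
    exact Nat.lt_succ_of_le (Finset.le_sup hx)
  have hreach : ∀ (ω : EdgeIdx G → Bool) (a b : V),
      Reaches ω a b ↔ ∃ n, RReach (A n) ω a b := by
    intro ω a b
    rw [reaches_iff_finset]
    constructor
    · rintro ⟨B, hB⟩; obtain ⟨n, hn⟩ := habs B; exact ⟨n, hB.mono hn⟩
    · rintro ⟨n, hn⟩; exact ⟨A n, hn⟩
  have hagree : ∀ (U : Finset V) (ω : EdgeIdx G → Bool), ∃ N, ∀ n ≥ N, ∀ i ∈ U,
      XA (A n) S ω i = decide (∃ s ∈ S, Reaches ω s i) := by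
    intro U ω
    have hch : ∀ i : V, ∃ N : ℕ, (∃ s ∈ S, Reaches ω s i) → ∃ s ∈ S, RReach (A N) ω s i := by
      intro i
      by_cases h : ∃ s ∈ S, Reaches ω s i
      · obtain ⟨s, hs, hr⟩ := h
        obtain ⟨n, hn⟩ := (hreach ω s i).1 hr
        exact ⟨n, fun _ => ⟨s, hs, hn⟩⟩
      · exact ⟨0, fun h' => absurd h' h⟩
    choose N hN using hch
    refine ⟨U.sup N, fun n hn i hi => ?_⟩
    by_cases h : ∃ s ∈ S, Reaches ω s i
    · obtain ⟨s, hs, hr⟩ := hN i h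
      rw [decide_eq_true h]
      exact decide_eq_true ⟨s, hs, hr.mono (hmono (le_trans (Finset.le_sup hi) hn))⟩
    · rw [decide_eq_false h]
      apply decide_eq_false
      rintro ⟨s, hs, hr⟩
      exact h ⟨s, hs, (hreach ω s i).2 ⟨n, hr⟩⟩
  -- eventual equality of integrands
  have hptwf : ∀ ω : EdgeIdx G → Bool, ∀ᶠ n in Filter.atTop,
      f (XA (A n) S ω) = f (fun i => decide (∃ s ∈ S, Reaches ω s i))
        ∧ g (XA (A n) S ω) = g (fun i => decide (∃ s ∈ S, Reaches ω s i)) := by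
    intro ω
    obtain ⟨N, hN⟩ := hagree (Uf ∪ Ug) ω
    refine Filter.eventually_atTop.2 ⟨N, fun n hn => ⟨?_, ?_⟩⟩
    · exact hUf _ _ (fun i hi => hN n hn i (Finset.mem_union_left _ hi))
    · exact hUg _ _ (fun i hi => hN n hn i (Finset.mem_union_right _ hi))
  -- measurability of the finite-stage integrands
  have hdepn : ∀ (n : ℕ) (h : (V → Bool) → ℝ), Measurable (fun ω => h (XA (A n) S ω)) :=
    fun n h => measurable_of_depOnly (A n) _ (fun ω ω' hh => by rw [XA_congr S hh])
  -- dominated convergence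
  have hFtend : Filter.Tendsto (fun n => ∫ ω, f (XA (A n) S ω) ∂μ) Filter.atTop
      (nhds (∫ ω, f (fun i => decide (∃ s ∈ S, Reaches ω s i)) ∂μ)) := by
    refine tendsto_integral_of_dominated_convergence (fun _ => Cf)
      (fun n => (hdepn n f).aestronglyMeasurable) (integrable_const Cf)
      (fun n => Filter.Eventually.of_forall fun ω => ?_) (Filter.Eventually.of_forall fun ω => ?_)
    · rw [Real.norm_eq_abs, abs_of_nonneg (hf0 _)]; exact hCf _
    · refine Filter.Tendsto.congr' ?_ tendsto_const_nhds
      filter_upwards [hptwf ω] with n hn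
      exact hn.1.symm
  have hGtend : Filter.Tendsto (fun n => ∫ ω, g (XA (A n) S ω) ∂μ) Filter.atTop
      (nhds (∫ ω, g (fun i => decide (∃ s ∈ S, Reaches ω s i)) ∂μ)) := by
    refine tendsto_integral_of_dominated_convergence (fun _ => Cg)
      (fun n => (hdepn n g).aestronglyMeasurable) (integrable_const Cg)
      (fun n => Filter.Eventually.of_forall fun ω => ?_) (Filter.Eventually.of_forall fun ω => ?_)
    · rw [Real.norm_eq_abs, abs_of_nonneg (hg0 _)]; exact hCg _
    · refine Filter.Tendsto.congr' ?_ tendsto_const_nhds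
      filter_upwards [hptwf ω] with n hn
      exact hn.2.symm
  have hFGtend : Filter.Tendsto (fun n => ∫ ω, f (XA (A n) S ω) * g (XA (A n) S ω) ∂μ)
      Filter.atTop
      (nhds (∫ ω, f (fun i => decide (∃ s ∈ S, Reaches ω s i)) *
        g (fun i => decide (∃ s ∈ S, Reaches ω s i)) ∂μ)) := by
    refine tendsto_integral_of_dominated_convergence (fun _ => Cf * Cg)
      (fun n => ((hdepn n f).mul (hdepn n g)).aestronglyMeasurable)
      (integrable_const (Cf * Cg))
      (fun n => Filter.Eventually.of_forall fun ω => ?_) (Filter.Eventually.of_forall fun ω => ?_)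
    · rw [Real.norm_eq_abs, abs_of_nonneg (mul_nonneg (hf0 _) (hg0 _))]
      exact mul_le_mul (hCf (XA (A n) S ω)) (hCg (XA (A n) S ω)) (hg0 (XA (A n) S ω))
        (le_trans (hf0 (XA (A n) S ω)) (hCf (XA (A n) S ω)))
    · refine Filter.Tendsto.congr' ?_ tendsto_const_nhds
      filter_upwards [hptwf ω] with n hn
      rw [hn.1, hn.2]
  exact le_of_tendsto_of_tendsto (hFtend.mul hGtend) hFGtend
    (Filter.Eventually.of_forall fun n =>
      fin_main μ hindep f g Cf Cg hf0 hg0 hCf hCg hfmono hgmono (A n) S)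
end

section
/- In the randomly oriented complete binary tree T_n of height n with parameter p ∈ [0,1], the expected size of the downwards percolation cluster (leaves excluded) is E[|C↓_n|] = Σ_{k=1}^n 2^{n−k}·ρ_k(p). -/
open MeasureTheory ProbabilityTheory Finset
open scoped Classical

/-- Vertices of the complete binary tree of height `n`: words over `{0,1}`
of length at most `n`.  The empty word is the root; words of length `n`
are the leaves; the level of `v` is `n - |v|`. -/
def Vtx (n : ℕ) : Type := {l : List Bool // l.length ≤ n}

/-- Edges of the complete binary tree of height `n`, indexed by the nonempty
words of length at most `n`: the edge joins such a word to its predecessor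
(the word obtained by deleting the last letter). -/
def Edg (n : ℕ) : Type := {l : List Bool // l ≠ [] ∧ l.length ≤ n}

noncomputable instance (n : ℕ) : Fintype (Vtx n) := by
  apply Fintype.ofInjective (fun v : Vtx n => fun i : Fin (n + 1) => v.1[i.1]?)
  intro u v h
  apply Subtype.ext
  apply List.ext_getElem?
  intro m
  by_cases hm : m < n + 1
  · exact congrFun h ⟨m, hm⟩
  · have hu := u.2
    have hv := v.2
    rw [List.getElem?_eq_none, List.getElem?_eq_none] <;> omega

noncomputable instance (n : ℕ) : Fintype (Edg n) := by
  apply Fintype.ofInjective (fun v : Edg n => fun i : Fin (n + 1) => v.1[i.1]?)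
  intro u v h
  apply Subtype.ext
  apply List.ext_getElem?
  intro m
  by_cases hm : m < n + 1
  · exact congrFun h ⟨m, hm⟩
  · have hu := u.2.2
    have hv := v.2.2
    rw [List.getElem?_eq_none, List.getElem?_eq_none] <;> omega

/-- The random orientation measure on the complete binary tree of height `n`:
each edge is oriented towards the root (coordinate `true`) with probability `p`,
independently of the other edges. -/
noncomputable def treeMeasure (n : ℕ) (p : ℝ) : Measure (Edg n → Bool) :=
  Measure.pi fun _ => bern p

/-- One oriented step in the configuration `ω`: `a → b` if the tree edge between
`a` and `b` is oriented from `a` to `b` (coordinate `true` means oriented towards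
the root, i.e. towards the shorter word). -/
def TStep {n : ℕ} (ω : Edg n → Bool) (a b : Vtx n) : Prop :=
  ∃ e : Edg n, (ω e = true ∧ e.1 = a.1 ∧ b.1 = e.1.dropLast) ∨
    (ω e = false ∧ e.1 = b.1 ∧ a.1 = e.1.dropLast)

/-- `X v`: the event that water, pumped into the leaves, reaches `v`, i.e. there is
a directed path from some leaf to `v`. -/
def Xwet {n : ℕ} (v : Vtx n) : Set (Edg n → Bool) :=
  {ω | ∃ w : Vtx n, w.1.length = n ∧ Relation.ReflTransGen (TStep ω) w v}

/-- `Y v`: the event that `v` gets wet in downwards percolation: there is a leaf `w`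
above `v` such that every edge on the path from `w` down to `v` is oriented
towards the root. -/
def Ydown {n : ℕ} (v : Vtx n) : Set (Edg n → Bool) :=
  {ω | ∃ w : List Bool, w.length = n ∧ v.1 <+: w ∧
    ∀ u : Edg n, u.1 <+: w → v.1.length < u.1.length → ω u = true}

/-- The recursion `ρ₀ = 1`, `ρ_{k+1} = 2 p ρ_k - (p ρ_k)²`. -/
noncomputable def rho (p : ℝ) : ℕ → ℝ
  | 0 => 1
  | k + 1 => 2 * p * rho p k - (p * rho p k) ^ 2

/-- `α^{(n)}_k`, the probability that water reaches a level-`k` vertex from below. -/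
noncomputable def alpha (p : ℝ) (n k : ℕ) : ℝ :=
  (1 - p) * p * ∑ i ∈ Finset.range (n - k),
    (1 - p) ^ i * rho p (k + i) * ∏ j ∈ Finset.range i, (1 - p * rho p (k + j))

/-- The size of the percolation cluster `C_n` (leaves excluded). -/
noncomputable def clusterSize (n : ℕ) (ω : Edg n → Bool) : ℕ :=
  Nat.card {v : Vtx n // v.1.length < n ∧ ω ∈ Xwet v}

/-- The size of the downwards percolation cluster `C↓_n` (leaves excluded). -/
noncomputable def downClusterSize (n : ℕ) (ω : Edg n → Bool) : ℕ :=
  Nat.card {v : Vtx n // v.1.length < n ∧ ω ∈ Ydown v}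

/-- The maximum level reached by water in downwards percolation. -/
noncomputable def maxLevel (n : ℕ) (ω : Edg n → Bool) : ℕ :=
  sSup ({0} ∪ {k | ∃ v : Vtx n, ω ∈ Ydown v ∧ n - v.1.length = k})

/-- The root of the tree. -/
def root (n : ℕ) : Vtx n := ⟨[], by simp⟩

/-!
A vertex `v` of level `k + 1` is wet in downwards percolation iff for one of its two children `c`
the edge `vc` points down and `c` is wet. These two events depend on the disjoint sets of edges
of the two subtrees, and each has probability `p ρ_k` by induction, so inclusion–exclusion gives
`P(Y_v) = 2 p ρ_k - (p ρ_k)² = ρ_{k+1}`. Linearity of expectation and the `2^{n-k}` vertices of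
level `k` give the sum.
-/

lemma dependsOn_mem_inter {ι : Type*} {α : ι → Type*} {A B : Set (Π i, α i)} {s : Set ι}
    (hA : DependsOn (· ∈ A) s) (hB : DependsOn (· ∈ B) s) : DependsOn (· ∈ A ∩ B) s :=
  fun _ _ h ↦ by simp only [Set.mem_inter_iff, hA h, hB h]

lemma DependsOn.eq_preimage_domRestrict {ι : Type*} {α : ι → Type*} {A : Set (Π i, α i)}
    {s : Set ι} (hA : DependsOn (· ∈ A) s) : A = s.domRestrict ⁻¹' (s.domRestrict '' A) := by
  ext x
  refine ⟨fun hx ↦ Set.mem_image_of_mem _ hx, fun ⟨y, hy, hxy⟩ ↦ ?_⟩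
  exact (hA fun i hi ↦ congrFun hxy ⟨i, hi⟩).mp hy

lemma measureReal_pi_inter_of_dependsOn {ι : Type*} [Fintype ι] {α : ι → Type*}
    [∀ i, MeasurableSpace (α i)] [∀ i, Countable (α i)] [∀ i, MeasurableSingletonClass (α i)]
    (μ : ∀ i, Measure (α i)) [∀ i, IsProbabilityMeasure (μ i)]
    {A B : Set (Π i, α i)} {S T : Finset ι} (hST : Disjoint S T)
    (hA : DependsOn (· ∈ A) S) (hB : DependsOn (· ∈ B) T) :
    (Measure.pi μ).real (A ∩ B) = (Measure.pi μ).real A * (Measure.pi μ).real B := by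
  have hindep :=
    (iIndepFun_pi (μ := μ) (X := fun i (x : α i) ↦ x) fun _ ↦ aemeasurable_id).indepFun_finset
    S T hST fun i ↦ measurable_pi_apply i
  rw [hA.eq_preimage_domRestrict, hB.eq_preimage_domRestrict]
  simp only [measureReal_def, ← ENNReal.toReal_mul]
  exact congrArg ENNReal.toReal <| hindep.measure_inter_preimage_eq_mul _ _
    (Set.to_countable _).measurableSet (Set.to_countable _).measurableSet

lemma integral_card_filter_mem {Ω V : Type*} [MeasurableSpace Ω] (μ : Measure Ω)
    [IsFiniteMeasure μ] (s : Finset V) (E : V → Set Ω) (hE : ∀ v, MeasurableSet (E v)) :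
    ∫ ω, ((s.filter (ω ∈ E ·)).card : ℝ) ∂μ = ∑ v ∈ s, μ.real (E v) := by
  have hsum : ∀ ω, ((s.filter (ω ∈ E ·)).card : ℝ) = ∑ v ∈ s, (E v).indicator 1 ω := by
    intro ω
    rw [Finset.card_filter]
    push_cast
    simp only [Set.indicator_apply, Pi.one_apply]
  simp_rw [hsum]
  rw [integral_finsetSum _ fun v _ ↦ (integrable_const 1).indicator (hE v)]
  exact Finset.sum_congr rfl fun v _ ↦ integral_indicator_one (hE v)

lemma isProbabilityMeasure_bern {p : ℝ} (hp0 : 0 ≤ p) (hp1 : p ≤ 1) :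
    IsProbabilityMeasure (bern p) := by
  constructor
  simp [bern, ← ENNReal.ofReal_add hp0 (sub_nonneg.2 hp1)]

lemma isProbabilityMeasure_treeMeasure {n : ℕ} {p : ℝ} (hp0 : 0 ≤ p) (hp1 : p ≤ 1) :
    IsProbabilityMeasure (treeMeasure n p) := by
  have := isProbabilityMeasure_bern hp0 hp1
  rw [treeMeasure]
  infer_instance

lemma measureReal_treeMeasure_apply_eq_true {n : ℕ} {p : ℝ} (hp0 : 0 ≤ p) (hp1 : p ≤ 1)
    (e : Edg n) : (treeMeasure n p).real {ω | ω e = true} = p := by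
  have := isProbabilityMeasure_bern hp0 hp1
  have h := (measurePreserving_eval (fun _ ↦ bern p) e).measure_preimage
    (measurableSet_singleton true).nullMeasurableSet
  rw [measureReal_def, treeMeasure]
  exact (congrArg ENNReal.toReal h).trans (by simp [bern, hp0])

lemma measureReal_treeMeasure_inter_of_dependsOn {n : ℕ} {p : ℝ} (hp0 : 0 ≤ p) (hp1 : p ≤ 1)
    {A B : Set (Edg n → Bool)} {S T : Finset (Edg n)} (hST : Disjoint S T)
    (hA : DependsOn (· ∈ A) S) (hB : DependsOn (· ∈ B) T) :
    (treeMeasure n p).real (A ∩ B) = (treeMeasure n p).real A * (treeMeasure n p).real B := by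
  have := isProbabilityMeasure_bern hp0 hp1
  exact measureReal_pi_inter_of_dependsOn _ hST hA hB

def Vtx.child {n : ℕ} (v : Vtx n) (hv : v.1.length < n) (b : Bool) : Vtx n :=
  ⟨v.1 ++ [b], by simp; omega⟩

def Vtx.childEdge {n : ℕ} (v : Vtx n) (hv : v.1.length < n) (b : Bool) : Edg n :=
  ⟨v.1 ++ [b], by simp, by simp; omega⟩

@[simp] lemma Vtx.child_val {n : ℕ} (v : Vtx n) (hv : v.1.length < n) (b : Bool) :
    (v.child hv b).1 = v.1 ++ [b] := rfl

@[simp] lemma Vtx.childEdge_val {n : ℕ} (v : Vtx n) (hv : v.1.length < n) (b : Bool) :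
    (v.childEdge hv b).1 = v.1 ++ [b] := rfl

noncomputable def Vtx.edgesAbove {n : ℕ} (v : Vtx n) : Finset (Edg n) :=
  Finset.univ.filter fun e ↦ v.1 <+: e.1 ∧ v.1.length < e.1.length

lemma Ydown_of_length_eq {n : ℕ} {v : Vtx n} (hv : v.1.length = n) : Ydown v = Set.univ :=
  Set.eq_univ_of_forall fun _ ↦
    ⟨v.1, hv, List.prefix_refl _, fun u _ hvu ↦ absurd u.2.2 (by omega)⟩

lemma dependsOn_mem_Ydown {n : ℕ} (v : Vtx n) : DependsOn (· ∈ Ydown v) v.edgesAbove := by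
  suffices h : ∀ ω ω' : Edg n → Bool, (∀ e ∈ v.edgesAbove, ω e = ω' e) →
      ω ∈ Ydown v → ω' ∈ Ydown v from
    fun ω ω' hωω' ↦ propext ⟨h ω ω' hωω', h ω' ω fun e he ↦ (hωω' e he).symm⟩
  rintro ω ω' hωω' ⟨w, hw, hvw, hup⟩
  refine ⟨w, hw, hvw, fun u huw hvu ↦ ?_⟩
  have hu : u ∈ v.edgesAbove := by
    simpa [Vtx.edgesAbove] using ⟨List.prefix_of_prefix_length_le hvw huw hvu.le, hvu⟩
  exact hωω' u hu ▸ hup u huw hvu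

lemma Ydown_eq_iUnion_child {n : ℕ} (v : Vtx n) (hv : v.1.length < n) :
    Ydown v = ⋃ b, {ω | ω (v.childEdge hv b) = true} ∩ Ydown (v.child hv b) := by
  ext ω
  simp only [Set.mem_iUnion, Set.mem_inter_iff, Set.mem_ofPred_eq]
  constructor
  · rintro ⟨w, hw, ⟨t, rfl⟩, hup⟩
    obtain _ | ⟨b, t⟩ := t
    · simp at hw; omega
    have hbw : v.1 ++ [b] <+: v.1 ++ b :: t := ⟨t, by simp⟩
    refine ⟨b, hup _ hbw (by simp), v.1 ++ b :: t, hw, hbw, fun u huw hbu ↦ hup u huw ?_⟩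
    simp at hbu; omega
  · rintro ⟨b, hb, w, hw, hbw, hup⟩
    refine ⟨w, hw, (List.prefix_append _ _).trans hbw, fun u huw hvu ↦ ?_⟩
    rcases (show u.1.length = v.1.length + 1 ∨ (v.child hv b).1.length < u.1.length by
      simp; omega) with hlen | hbu
    · have : u = v.childEdge hv b := Subtype.ext <|
        (List.prefix_of_prefix_length_le huw hbw (by simp [hlen])).eq_of_length (by simp [hlen])
      exact this ▸ hb
    · exact hup u huw hbu

lemma measureReal_Ydown {n : ℕ} {p : ℝ} (hp0 : 0 ≤ p) (hp1 : p ≤ 1) :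
    ∀ (k : ℕ) (v : Vtx n), n - v.1.length = k → (treeMeasure n p).real (Ydown v) = rho p k
  | 0, v, hv => by
    have := isProbabilityMeasure_treeMeasure (n := n) hp0 hp1
    rw [Ydown_of_length_eq (by have := v.2; omega), rho, probReal_univ]
  | k + 1, v, hv => by
    have := isProbabilityMeasure_treeMeasure (n := n) hp0 hp1
    have hvn : v.1.length < n := by omega
    set A := fun b ↦ {ω | ω (v.childEdge hvn b) = true} ∩ Ydown (v.child hvn b)
    have hedge (b : Bool) : DependsOn (· ∈ {ω : Edg n → Bool | ω (v.childEdge hvn b) = true})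
        ({v.childEdge hvn b} : Finset (Edg n)) :=
      fun _ _ h ↦ congrArg (· = true) (h _ (Finset.mem_singleton_self _))
    have hA_dep (b : Bool) :
        DependsOn (· ∈ A b) (Finset.univ.filter fun e : Edg n ↦ v.1 ++ [b] <+: e.1) := by
      refine dependsOn_mem_inter ((hedge b).mono ?_) ((dependsOn_mem_Ydown (v.child hvn b)).mono ?_)
      · simp
      · intro e he
        simp_all [Vtx.edgesAbove]
    have hA (b : Bool) : (treeMeasure n p).real (A b) = p * rho p k := by
      rw [measureReal_treeMeasure_inter_of_dependsOn hp0 hp1 _ (hedge b) (dependsOn_mem_Ydown _),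
        measureReal_treeMeasure_apply_eq_true hp0 hp1,
        measureReal_Ydown hp0 hp1 k (v.child hvn b) (by simp; omega)]
      simp [Vtx.edgesAbove]
    have hAA : (treeMeasure n p).real (A true ∩ A false) = (p * rho p k) * (p * rho p k) := by
      rw [measureReal_treeMeasure_inter_of_dependsOn hp0 hp1 ?_ (hA_dep true) (hA_dep false),
        hA, hA]
      refine Finset.disjoint_filter.2 fun e _ htrue hfalse ↦ ?_
      simpa using (List.prefix_of_prefix_length_le htrue hfalse (by simp)).eq_of_length (by simp)
    have hY : Ydown v = A true ∪ A false := by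
      rw [Ydown_eq_iUnion_child v hvn]
      exact iSup_bool_eq
    have hunion := measureReal_union_add_inter (μ := treeMeasure n p) (s := A true)
      (Set.to_countable (A false)).measurableSet
    rw [hY, rho]
    linarith [hA true, hA false]

def Vtx.equivVectorOfLength {n m : ℕ} (hm : m ≤ n) :
    {v : Vtx n // v.1.length = m} ≃ List.Vector Bool m where
  toFun v := ⟨v.1.1, v.2⟩
  invFun l := ⟨⟨l.1, l.2.trans_le hm⟩, l.2⟩

lemma Vtx.card_filter_length_eq {n m : ℕ} (hm : m ≤ n) :
    (Finset.univ.filter fun v : Vtx n ↦ v.1.length = m).card = 2 ^ m := by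
  rw [← Fintype.card_subtype, Fintype.card_congr (Vtx.equivVectorOfLength hm), card_vector,
    Fintype.card_bool]

lemma Vtx.sum_filter_length_lt {R : Type*} [Semiring R] (n : ℕ) (f : ℕ → R) :
    ∑ v ∈ Finset.univ.filter (fun v : Vtx n ↦ v.1.length < n), f (n - v.1.length) =
      ∑ k ∈ Finset.Icc 1 n, (2 : R) ^ (n - k) * f k := by
  rw [← Finset.sum_fiberwise_of_maps_to (g := fun v : Vtx n ↦ n - v.1.length)
    (t := Finset.Icc 1 n) fun v hv ↦ by simp at hv ⊢; omega]
  refine Finset.sum_congr rfl fun k hk ↦ ?_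
  have hfiber : ((Finset.univ.filter fun v : Vtx n ↦ v.1.length < n).filter
      fun v ↦ n - v.1.length = k) = Finset.univ.filter fun v : Vtx n ↦ v.1.length = n - k := by
    ext v
    simp only [Finset.mem_Icc] at hk
    simp only [Finset.mem_filter, Finset.mem_univ, true_and]
    omega
  have hlevel (v) (hv : v ∈ Finset.univ.filter fun v : Vtx n ↦ v.1.length = n - k) :
      f (n - v.1.length) = f k := by
    rw [(Finset.mem_filter.1 hv).2, Nat.sub_sub_self (Finset.mem_Icc.1 hk).2]
  rw [hfiber, Finset.sum_congr rfl hlevel, Finset.sum_const,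
    Vtx.card_filter_length_eq (Nat.sub_le n k), nsmul_eq_mul]
  push_cast
  rfl

/-- **Expected size of the downwards percolation cluster.**
`E[|C↓_n|] = ∑_{k=1}^n 2^{n-k} ρ_k`. -/
theorem expected_downClusterSize (n : ℕ) (p : ℝ) (hp0 : 0 ≤ p) (hp1 : p ≤ 1) :
    ∫ ω, (downClusterSize n ω : ℝ) ∂(treeMeasure n p) =
      ∑ k ∈ Finset.Icc 1 n, (2 : ℝ) ^ (n - k) * rho p k := by
  have := isProbabilityMeasure_treeMeasure (n := n) hp0 hp1
  have hcard (ω : Edg n → Bool) : downClusterSize n ω =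
      ((Finset.univ.filter fun v : Vtx n ↦ v.1.length < n).filter (ω ∈ Ydown ·)).card := by
    rw [downClusterSize, Nat.card_eq_fintype_card, Fintype.card_subtype, Finset.filter_filter]
  simp_rw [hcard]
  rw [integral_card_filter_mem _ _ _ fun v ↦ (Set.to_countable _).measurableSet,
    ← Vtx.sum_filter_length_lt]
  exact Finset.sum_congr rfl fun v _ ↦ measureReal_Ydown hp0 hp1 _ v rfl
end

section
/- Fix p ∈ [0,1] and define the sequence ρ_k by ρ_0 = 1 and ρ_{k+1} = 2p·ρ_k − (p·ρ_k)². Then: (i) if p ≤ 1/2, then ρ_k → 0 as k → ∞; (ii) if p > 1/2, then ρ_k → (2p − 1)/p², which is strictly positive. -/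
open Filter Finset

/-!
`ρ_k` is the orbit of `1` under `x ↦ 2px - (px)²`, whose fixed points are `0` and
`(2p - 1)/p²`. Let `c` be the largest fixed point in `[0, 1]`. The map is monotone on
`[c, 1]` and lies below the identity there, so `ρ_k` decreases to a limit `L ≥ c`, which is
again a fixed point, hence `L = c`.
-/

def rhoStep (p x : ℝ) : ℝ := 2 * p * x - (p * x) ^ 2

lemma rho_eq_iterate (p : ℝ) (k : ℕ) : rho p k = (rhoStep p)^[k] 1 := by
  induction k with
  | zero => rfl
  | succ k ih => rw [Function.iterate_succ_apply', ← ih]; rfl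

namespace rhoStep

variable {p x y : ℝ}

lemma continuous (p : ℝ) : Continuous (rhoStep p) := by
  unfold rhoStep; fun_prop

lemma le_one (p x : ℝ) : rhoStep p x ≤ 1 := by
  unfold rhoStep; nlinarith [sq_nonneg (1 - p * x)]

lemma le_self (hx : 0 ≤ x) (h : 2 * p - 1 ≤ p ^ 2 * x) : rhoStep p x ≤ x := by
  unfold rhoStep; nlinarith [mul_nonneg hx (sub_nonneg.2 h)]

lemma monotoneOn (hp0 : 0 ≤ p) (hp1 : p ≤ 1) : MonotoneOn (rhoStep p) (Set.Iic 1) := by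
  intro x hx y hy hxy
  have hpxy : p * (x + y) ≤ 2 := by nlinarith [Set.mem_Iic.1 hx, Set.mem_Iic.1 hy]
  have key : rhoStep p y - rhoStep p x = p * (y - x) * (2 - p * (x + y)) := by
    unfold rhoStep; ring
  nlinarith [mul_nonneg (mul_nonneg hp0 (sub_nonneg.2 hxy)) (sub_nonneg.2 hpxy)]

lemma isFixedPt_iff : Function.IsFixedPt (rhoStep p) x ↔ x = 0 ∨ p ^ 2 * x = 2 * p - 1 := by
  have key : rhoStep p x - x = x * (2 * p - 1 - p ^ 2 * x) := by unfold rhoStep; ring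
  rw [Function.IsFixedPt, ← sub_eq_zero, key, mul_eq_zero, sub_eq_zero, eq_comm (a := 2 * p - 1)]

end rhoStep

section Convergence

variable {p c : ℝ} (hp0 : 0 ≤ p) (hp1 : p ≤ 1) (hc : Function.IsFixedPt (rhoStep p) c)
  (hc1 : c ≤ 1)
include hp0 hp1 hc hc1

lemma rho_mem_Icc (k : ℕ) : rho p k ∈ Set.Icc c 1 := by
  induction k with
  | zero => exact ⟨hc1, le_rfl⟩
  | succ k ih =>
    refine ⟨?_, rhoStep.le_one p _⟩
    calc c = rhoStep p c := hc.symm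
      _ ≤ rhoStep p (rho p k) := rhoStep.monotoneOn hp0 hp1 hc1 ih.2 ih.1
      _ = rho p (k + 1) := rfl

variable (hc0 : 0 ≤ c) (hle : 2 * p - 1 ≤ p ^ 2 * c)
include hc0 hle

lemma rho_antitone : Antitone (rho p) := by
  refine antitone_nat_of_succ_le fun k => ?_
  have hk := (rho_mem_Icc hp0 hp1 hc hc1 k).1
  exact rhoStep.le_self (hc0.trans hk) (hle.trans (by gcongr))

lemma exists_tendsto_rho_isFixedPt :
    ∃ L, c ≤ L ∧ Function.IsFixedPt (rhoStep p) L ∧ Tendsto (rho p) atTop (nhds L) := by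
  have hbdd : BddBelow (Set.range (rho p)) :=
    ⟨c, Set.forall_mem_range.2 fun k => (rho_mem_Icc hp0 hp1 hc hc1 k).1⟩
  set L := ⨅ k, rho p k
  have hlim : Tendsto (rho p) atTop (nhds L) :=
    tendsto_atTop_ciInf (rho_antitone hp0 hp1 hc hc1 hc0 hle) hbdd
  refine ⟨L, le_ciInf fun k => (rho_mem_Icc hp0 hp1 hc hc1 k).1, ?_, hlim⟩
  rw [funext (rho_eq_iterate p)] at hlim
  exact isFixedPt_of_tendsto_iterate hlim (rhoStep.continuous p).continuousAt

end Convergence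

/-- **Percolation threshold.**  The threshold is `1/2`:
if `p ≤ 1/2` then `ρ_n → 0`; if `p > 1/2` then `ρ_n → (2p - 1)/p² > 0`. -/
theorem rho_tendsto (p : ℝ) (hp0 : 0 ≤ p) (hp1 : p ≤ 1) :
    (p ≤ 1 / 2 → Tendsto (rho p) atTop (nhds 0)) ∧
    (1 / 2 < p →
      Tendsto (rho p) atTop (nhds ((2 * p - 1) / p ^ 2)) ∧ 0 < (2 * p - 1) / p ^ 2) := by
  constructor
  · intro hp
    obtain ⟨L, hL0, hfix, hlim⟩ := exists_tendsto_rho_isFixedPt hp0 hp1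
      (rhoStep.isFixedPt_iff.2 (.inl rfl)) zero_le_one le_rfl (by linarith)
    have hL : L = 0 := by
      rcases rhoStep.isFixedPt_iff.1 hfix with h | h
      · exact h
      · have hp_half : p = 1 / 2 := by nlinarith [mul_nonneg (sq_nonneg p) hL0]
        subst hp_half
        linarith
    rwa [hL] at hlim
  · intro hp
    have hp2 : 0 < p ^ 2 := by positivity
    set c := (2 * p - 1) / p ^ 2
    have hc_pos : 0 < c := div_pos (by linarith) hp2
    have hpc : p ^ 2 * c = 2 * p - 1 := mul_div_cancel₀ _ hp2.ne'
    have hc1 : c ≤ 1 := (div_le_one hp2).2 (by nlinarith [sq_nonneg (p - 1)])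
    obtain ⟨L, hcL, hfix, hlim⟩ := exists_tendsto_rho_isFixedPt hp0 hp1
      (rhoStep.isFixedPt_iff.2 (.inr hpc)) hc1 hc_pos.le hpc.ge
    have hL : L = c := by
      rcases rhoStep.isFixedPt_iff.1 hfix with h | h
      · linarith
      · exact mul_left_cancel₀ hp2.ne' (h.trans hpc.symm)
    exact ⟨hL ▸ hlim, hc_pos⟩
end

section
/- Fix p with 0 < p < 1/2 and define ρ_k by ρ_0 = 1 and ρ_{k+1} = 2p·ρ_k − (p·ρ_k)². Then for every k ≥ 0, exp(−2p/(1 − 2p)²)·(2p)^k ≤ ρ_k ≤ (2p)^k. Consequently, if (p_n) is a sequence in (0,1/2) with p_n → 0 and ρ^{(n)}_k denotes the sequence with parameter p_n, then sup_{k ≥ 0} |ρ^{(n)}_k/(2p_n)^k − 1| → 0 as n → ∞, i.e., ρ^{(n)}_k ∼ (2p_n)^k uniformly in k. -/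
/-!
Since `ρ_{k+1} = 2pρ_k (1 - pρ_k/2)`, induction with `0 ≤ ρ_k ≤ (2p)^k` gives
`(2p)^k ∏_{j<k} (1 - p(2p)^j/2) ≤ ρ_k ≤ (2p)^k`. From `log y ≥ 1 - 1/y`, each factor `1 - x` with
`0 ≤ x ≤ 2p` is at least `exp(-x/(1-2p))`, and the geometric series bounds the exponents' sum by
`2p/(1-2p)²`. So `ρ_k/(2p)^k ∈ [exp(-2p/(1-2p)²), 1]` for every `k`, an interval that shrinks to
`{1}` as `p → 0`.
-/

open Filter Finset

open Real

lemma rho_succ (p : ℝ) (k : ℕ) : rho p (k + 1) = 2 * p * rho p k * (1 - p * rho p k / 2) := by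
  rw [rho]; ring

lemma pow_mul_prod_le_rho_and_rho_le_pow {p : ℝ} (hp : 0 ≤ p) (hp' : p ≤ 1 / 2) (k : ℕ) :
    (2 * p) ^ k * ∏ j ∈ range k, (1 - p * (2 * p) ^ j / 2) ≤ rho p k ∧
      rho p k ≤ (2 * p) ^ k := by
  have hfactor : ∀ j : ℕ, 0 ≤ 1 - p * (2 * p) ^ j / 2 := fun j => by
    nlinarith [pow_le_one₀ (n := j) (by linarith : 0 ≤ 2 * p) (by linarith)]
  induction k with
  | zero => simp [rho]
  | succ k ih =>
    obtain ⟨hlo, hhi⟩ := ih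
    have hrho : 0 ≤ rho p k :=
      le_trans (mul_nonneg (by positivity) (prod_nonneg fun j _ => hfactor j)) hlo
    constructor
    · calc (2 * p) ^ (k + 1) * ∏ j ∈ range (k + 1), (1 - p * (2 * p) ^ j / 2)
          = 2 * p * ((2 * p) ^ k * ∏ j ∈ range k, (1 - p * (2 * p) ^ j / 2)) *
              (1 - p * (2 * p) ^ k / 2) := by rw [prod_range_succ]; ring
        _ ≤ 2 * p * rho p k * (1 - p * rho p k / 2) := by
          gcongr
          exact hfactor k
        _ = rho p (k + 1) := (rho_succ p k).symm
    · have : 2 * p * rho p k ≤ 2 * p * (2 * p) ^ k := by gcongr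
      rw [rho]
      linarith [sq_nonneg (p * rho p k), pow_succ' (2 * p) k]

lemma exp_neg_div_le_one_sub {x c : ℝ} (hx : 0 ≤ x) (hxc : x ≤ c) (hc : c < 1) :
    exp (-(x / (1 - c))) ≤ 1 - x := by
  have hx1 : 0 < 1 - x := by linarith
  calc exp (-(x / (1 - c))) ≤ exp (1 - (1 - x)⁻¹) := by
        rw [show 1 - (1 - x)⁻¹ = -(x / (1 - x)) by field_simp; ring]
        exact exp_le_exp.2 (neg_le_neg (div_le_div_of_nonneg_left hx (by linarith) (by linarith)))
    _ ≤ exp (log (1 - x)) := exp_le_exp.2 (one_sub_inv_le_log_of_pos hx1)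
    _ = 1 - x := exp_log hx1

lemma exp_neg_sum_div_le_prod_one_sub {ι : Type*} (s : Finset ι) {x : ι → ℝ} {c : ℝ}
    (hx : ∀ i ∈ s, 0 ≤ x i ∧ x i ≤ c) (hc : c < 1) :
    exp (-((∑ i ∈ s, x i) / (1 - c))) ≤ ∏ i ∈ s, (1 - x i) := by
  rw [sum_div, ← sum_neg_distrib, exp_sum]
  exact prod_le_prod (fun i _ => (exp_pos _).le)
    fun i hi => exp_neg_div_le_one_sub (hx i hi).1 (hx i hi).2 hc

lemma exp_le_prod_range_one_sub {p : ℝ} (hp : 0 ≤ p) (hp' : p < 1 / 2) (k : ℕ) :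
    exp (-(2 * p) / (1 - 2 * p) ^ 2) ≤ ∏ j ∈ range k, (1 - p * (2 * p) ^ j / 2) := by
  have hpow : ∀ j : ℕ, (2 * p) ^ j ≤ 1 := fun j => pow_le_one₀ (by linarith) (by linarith)
  have hsum : ∑ j ∈ range k, p * (2 * p) ^ j / 2 ≤ 2 * p / (1 - 2 * p) :=
    calc ∑ j ∈ range k, p * (2 * p) ^ j / 2 = p / 2 * ∑ j ∈ range k, (2 * p) ^ j := by
          rw [mul_sum]; congr with j; ring
      _ ≤ p / 2 * (1 / (1 - 2 * p)) := by
          gcongr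
          simpa [← range_eq_Ico] using
            geom_sum_Ico_le_of_lt_one (m := 0) (n := k) (by linarith : 0 ≤ 2 * p) (by linarith)
      _ ≤ 2 * p / (1 - 2 * p) := by
          rw [mul_one_div]
          exact div_le_div_of_nonneg_right (by linarith) (by linarith)
  refine le_trans (exp_le_exp.2 ?_) (exp_neg_sum_div_le_prod_one_sub _ (c := 2 * p)
    (fun j _ => ⟨by positivity, by nlinarith [hpow j]⟩) (by linarith))
  rw [neg_div, neg_le_neg_iff, sq, ← div_div]
  exact div_le_div_of_nonneg_right hsum (by linarith)

lemma rho_bounds {p : ℝ} (hp : 0 ≤ p) (hp' : p < 1 / 2) (k : ℕ) :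
    exp (-(2 * p) / (1 - 2 * p) ^ 2) * (2 * p) ^ k ≤ rho p k ∧ rho p k ≤ (2 * p) ^ k := by
  obtain ⟨hlo, hhi⟩ := pow_mul_prod_le_rho_and_rho_le_pow hp hp'.le k
  refine ⟨le_trans ?_ hlo, hhi⟩
  rw [mul_comm]
  gcongr
  exact exp_le_prod_range_one_sub hp hp' k

lemma ciSup_abs_sub_one_le {ι : Type*} [Nonempty ι] {f : ι → ℝ} {a : ℝ}
    (h : ∀ i, a ≤ f i ∧ f i ≤ 1) : ⨆ i, |f i - 1| ≤ 1 - a :=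
  ciSup_le fun i => abs_le.2 ⟨by linarith [h i], by linarith [h i]⟩

/-- **Asymptotics of `ρ_k` in the badly subcritical regime.**
For `0 < p < 1/2`, `exp(-2p/(1-2p)²) (2p)^k ≤ ρ_k ≤ (2p)^k` for all `k`;
consequently, if `p_n → 0` then `ρ_k ∼ (2 p_n)^k` uniformly in `k`. -/
theorem rho_asymptotics :
    (∀ p : ℝ, 0 < p → p < 1 / 2 → ∀ k : ℕ,
      Real.exp (-(2 * p) / (1 - 2 * p) ^ 2) * (2 * p) ^ k ≤ rho p k ∧
        rho p k ≤ (2 * p) ^ k) ∧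
    (∀ pn : ℕ → ℝ, (∀ n, 0 < pn n) → (∀ n, pn n < 1 / 2) →
      Tendsto pn atTop (nhds 0) →
      Tendsto (fun n => ⨆ k : ℕ, |rho (pn n) k / (2 * pn n) ^ k - 1|)
        atTop (nhds 0)) := by
  refine ⟨fun p hp hp' k => rho_bounds hp.le hp' k, fun pn hpos hlt hlim => ?_⟩
  have hsup : ∀ n, ⨆ k : ℕ, |rho (pn n) k / (2 * pn n) ^ k - 1| ≤
      1 - exp (-(2 * pn n) / (1 - 2 * pn n) ^ 2) := fun n =>
    ciSup_abs_sub_one_le fun k => by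
      have hpow : 0 < (2 * pn n) ^ k := pow_pos (by linarith [hpos n]) k
      obtain ⟨hlo, hhi⟩ := rho_bounds (hpos n).le (hlt n) k
      exact ⟨(le_div_iff₀ hpow).2 hlo, (div_le_one hpow).2 hhi⟩
  have hcont : ContinuousAt (fun p : ℝ => 1 - exp (-(2 * p) / (1 - 2 * p) ^ 2)) 0 := by
    fun_prop (disch := norm_num)
  refine squeeze_zero (fun n => iSup_nonneg fun k => abs_nonneg _) hsup ?_
  simpa [Function.comp_def] using hcont.tendsto.comp hlim
end

section
/- For every real x with 0 ≤ x < 1 and every k ∈ ℕ, ∏_{i=1}^{k} (1 − x^i) ≥ exp(−x/(1 − x)²). -/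
/-!
Since `log (1 - t) ≥ -t / (1 - t)`, each factor satisfies
`1 - x ^ i ≥ exp (-x ^ i / (1 - x ^ i)) ≥ exp (-x ^ i / (1 - x))`, so the product is at least
`exp (-(∑ x ^ i) / (1 - x))`, and the geometric sum `∑_{i ≥ 1} x ^ i` is at most `x / (1 - x)`.
-/

open Finset Real

theorem Real.exp_neg_div_one_sub_le {t : ℝ} (ht : t < 1) : exp (-t / (1 - t)) ≤ 1 - t := by
  have ht' : 0 < 1 - t := sub_pos.2 ht
  rw [← le_log_iff_exp_le ht']
  calc -t / (1 - t) = 1 - (1 - t)⁻¹ := by field_simp; ring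
    _ ≤ log (1 - t) := one_sub_inv_le_log_of_pos ht'

theorem Real.exp_neg_div_le_one_sub_of_le {x y : ℝ} (hy : 0 ≤ y) (hyx : y ≤ x) (hx : x < 1) :
    exp (-y / (1 - x)) ≤ 1 - y :=
  calc exp (-y / (1 - x)) ≤ exp (-y / (1 - y)) := by
        rw [exp_le_exp, neg_div, neg_div, neg_le_neg_iff]
        exact div_le_div_of_nonneg_left hy (by linarith) (by linarith)
    _ ≤ 1 - y := exp_neg_div_one_sub_le (hyx.trans_lt hx)

theorem sum_Icc_one_pow_le {K : Type*} [Field K] [LinearOrder K] [IsStrictOrderedRing K]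
    {x : K} (hx0 : 0 ≤ x) (hx1 : x < 1) (k : ℕ) :
    ∑ i ∈ Icc 1 k, x ^ i ≤ x / (1 - x) := by
  simpa [Ico_add_one_right_eq_Icc] using geom_sum_Ico_le_of_lt_one (m := 1) (n := k + 1) hx0 hx1

/-- For `0 ≤ x < 1` and every `k`, `∏_{i=1}^k (1 - x^i) ≥ exp(-x/(1-x)²)`. -/
theorem prod_one_sub_pow_ge (x : ℝ) (hx0 : 0 ≤ x) (hx1 : x < 1) (k : ℕ) :
    Real.exp (-x / (1 - x) ^ 2) ≤ ∏ i ∈ Finset.Icc 1 k, (1 - x ^ i) := by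
  have hsum : -x / (1 - x) ^ 2 ≤ ∑ i ∈ Icc 1 k, -x ^ i / (1 - x) := by
    rw [← sum_div, sum_neg_distrib, neg_div, neg_div, neg_le_neg_iff, sq, ← div_div]
    gcongr
    exact sum_Icc_one_pow_le hx0 hx1 k
  calc exp (-x / (1 - x) ^ 2) ≤ ∏ i ∈ Icc 1 k, exp (-x ^ i / (1 - x)) := by
        rw [← exp_sum]
        exact exp_le_exp.2 hsum
    _ ≤ ∏ i ∈ Icc 1 k, (1 - x ^ i) := by
        refine prod_le_prod (fun _ _ ↦ (exp_pos _).le) fun i hi ↦ ?_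
        exact exp_neg_div_le_one_sub_of_le (pow_nonneg hx0 i)
          (pow_le_of_le_one hx0 hx1.le (Nat.one_le_iff_ne_zero.1 (mem_Icc.1 hi).1)) hx1
end

section
/- Fix p with 0 < p < 1 and define ρ_k by ρ_0 = 1 and ρ_{k+1} = 2p·ρ_k − (p·ρ_k)². Then for every n ≥ 1, 2^{n−1}·ρ_1 ≤ Σ_{k=1}^n 2^{n−k}·ρ_k ≤ 2^{n−1}·ρ_1/(1 − p). -/
/-!
Since `ρ_{k+1} ≤ 2 p ρ_k`, the term `2^{n-k} ρ_k` is at most `2^{n-1} ρ_1 p^{k-1}`, so the sum is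
dominated by `2^{n-1} ρ_1` times a geometric series of ratio `p`. The lower bound is the first
term of the sum, all terms being nonnegative because `x ↦ 2 p x - (p x)²` maps `[0, 1]` into itself.
-/

open Filter Finset

lemma rho_succ_eq (p : ℝ) (k : ℕ) : rho p (k + 1) = p * rho p k * (2 - p * rho p k) := by
  rw [rho]; ring

lemma rho_le_one (p : ℝ) : ∀ k, rho p k ≤ 1
  | 0 => le_rfl
  | k + 1 => by rw [rho]; nlinarith [sq_nonneg (p * rho p k - 1)]

lemma rho_nonneg {p : ℝ} (hp0 : 0 ≤ p) (hp2 : p ≤ 2) : ∀ k, 0 ≤ rho p k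
  | 0 => zero_le_one
  | k + 1 => by
    have hpρ : p * rho p k ≤ 2 := by nlinarith [rho_le_one p k, rho_nonneg hp0 hp2 k]
    rw [rho_succ_eq]
    exact mul_nonneg (mul_nonneg hp0 (rho_nonneg hp0 hp2 k)) (sub_nonneg.2 hpρ)

lemma rho_succ_le (p : ℝ) (k : ℕ) : rho p (k + 1) ≤ 2 * p * rho p k := by
  rw [rho]; nlinarith [sq_nonneg (p * rho p k)]

lemma rho_succ_le_pow_mul {p : ℝ} (hp : 0 ≤ p) : ∀ k, rho p (k + 1) ≤ (2 * p) ^ k * rho p 1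
  | 0 => by rw [pow_zero, one_mul]
  | k + 1 =>
    calc rho p (k + 2) ≤ 2 * p * rho p (k + 1) := rho_succ_le p (k + 1)
      _ ≤ 2 * p * ((2 * p) ^ k * rho p 1) := by gcongr; exact rho_succ_le_pow_mul hp k
      _ = (2 * p) ^ (k + 1) * rho p 1 := by ring

lemma two_pow_mul_rho_le {p : ℝ} (hp : 0 ≤ p) {n k : ℕ} (hk : 1 ≤ k) (hkn : k ≤ n) :
    (2 : ℝ) ^ (n - k) * rho p k ≤ 2 ^ (n - 1) * rho p 1 * p ^ (k - 1) := by
  obtain ⟨j, rfl⟩ := Nat.exists_eq_add_of_le' hk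
  have hsplit : (2 : ℝ) ^ (n - 1) = 2 ^ (n - (j + 1)) * 2 ^ j := by
    rw [← pow_add]; congr 1; omega
  calc (2 : ℝ) ^ (n - (j + 1)) * rho p (j + 1)
      ≤ 2 ^ (n - (j + 1)) * ((2 * p) ^ j * rho p 1) := by
        gcongr; exact rho_succ_le_pow_mul hp j
    _ = 2 ^ (n - 1) * rho p 1 * p ^ (j + 1 - 1) := by
        rw [hsplit, Nat.add_sub_cancel, mul_pow]; ring

lemma sum_Icc_one_pow_sub_one_le {x : ℝ} (hx0 : 0 ≤ x) (hx1 : x < 1) (n : ℕ) :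
    ∑ k ∈ Icc 1 n, x ^ (k - 1) ≤ (1 - x)⁻¹ := by
  rw [← Ico_add_one_right_eq_Icc, sum_Ico_eq_sum_range, Nat.add_sub_cancel]
  simp only [Nat.add_sub_cancel_left]
  simpa using geom_sum_Ico_le_of_lt_one (m := 0) (n := n) hx0 hx1

/-- **Bounds on `∑_{k=1}^n 2^{n-k} ρ_k`.**  For `0 < p < 1` and `n ≥ 1`,
`2^{n-1} ρ_1 ≤ ∑_{k=1}^n 2^{n-k} ρ_k ≤ 2^{n-1} ρ_1 / (1 - p)`. -/
theorem sum_two_pow_rho_bounds (p : ℝ) (hp0 : 0 < p) (hp1 : p < 1)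
    (n : ℕ) (hn : 1 ≤ n) :
    (2 : ℝ) ^ (n - 1) * rho p 1 ≤
        ∑ k ∈ Finset.Icc 1 n, (2 : ℝ) ^ (n - k) * rho p k ∧
      ∑ k ∈ Finset.Icc 1 n, (2 : ℝ) ^ (n - k) * rho p k ≤
        (2 : ℝ) ^ (n - 1) * rho p 1 / (1 - p) := by
  have hρ : ∀ k, 0 ≤ rho p k := rho_nonneg hp0.le (by linarith)
  constructor
  · simpa using single_le_sum (f := fun k ↦ (2 : ℝ) ^ (n - k) * rho p k)
      (fun k _ ↦ mul_nonneg (by positivity) (hρ k)) (mem_Icc.2 ⟨le_rfl, hn⟩)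
  · calc ∑ k ∈ Icc 1 n, (2 : ℝ) ^ (n - k) * rho p k
        ≤ ∑ k ∈ Icc 1 n, 2 ^ (n - 1) * rho p 1 * p ^ (k - 1) :=
          sum_le_sum fun k hk ↦ two_pow_mul_rho_le hp0.le (mem_Icc.1 hk).1 (mem_Icc.1 hk).2
      _ = 2 ^ (n - 1) * rho p 1 * ∑ k ∈ Icc 1 n, p ^ (k - 1) := (mul_sum _ _ _).symm
      _ ≤ 2 ^ (n - 1) * rho p 1 * (1 - p)⁻¹ := by
          gcongr
          · exact mul_nonneg (by positivity) (hρ 1)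
          · exact sum_Icc_one_pow_sub_one_le hp0.le hp1 n
      _ = 2 ^ (n - 1) * rho p 1 / (1 - p) := (div_eq_mul_inv _ _).symm
end
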